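/- arXiv:2602.24105 — 6 statements merged into one kernel-verified Lean document; each statement's English description precedes it below -/
import Mathlib

section
/- Let A = (a_{ij}) be an n×m binary matrix belonging to 𝔠_{n×m}, let s be the number of ones in the first row of A and t the number of ones in the first column of A. Then the row value of the first row is x_1 = 2^s − 1 and the column value of the first column is y_1 = 2^t − 1. -/
/-- The integer encoded (in binary, most significant digit first) by the `i`-th row
of the binary matrix `A`, i.e. `x_i = ∑_j a_{ij} 2^{m-j}` (1-indexed). -/
def rowVal {n m : ℕ} (A : Fin n → Fin m → Fin 2) (i : Fin n) : ℕ :=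
  ∑ j : Fin m, (A i j : ℕ) * 2 ^ (m - 1 - (j : ℕ))

/-- The integer encoded by the `j`-th column of `A`, i.e. `y_j = ∑_i a_{ij} 2^{n-i}`. -/
def colVal {n m : ℕ} (A : Fin n → Fin m → Fin 2) (j : Fin m) : ℕ :=
  ∑ i : Fin n, (A i j : ℕ) * 2 ^ (n - 1 - (i : ℕ))

/-- `A ∈ 𝔠_{n×m}`: rows and columns sorted in lexicographically nondecreasing order. -/
def memC {n m : ℕ} (A : Fin n → Fin m → Fin 2) : Prop :=
  Monotone (rowVal A) ∧ Monotone (colVal A)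

/-- `A ∈ 𝔡_{n×m}`: rows and columns sorted in lexicographically nonincreasing order. -/
def memD {n m : ℕ} (A : Fin n → Fin m → Fin 2) : Prop :=
  Antitone (rowVal A) ∧ Antitone (colVal A)

/-- `Λ_n^k`: n×n binary matrices with exactly `k` ones in each row and each column. -/
def lambdaSet (n k : ℕ) : Set (Fin n → Fin n → Fin 2) :=
  {A | (∀ i, ∑ j, (A i j : ℕ) = k) ∧ (∀ j, ∑ i, (A i j : ℕ) = k)}

/-- `Γ_n^k = 𝔠_{n×n} ∩ Λ_n^k`. -/
def GammaSet (n k : ℕ) : Set (Fin n → Fin n → Fin 2) :=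
  {A | memC A} ∩ lambdaSet n k

/-- `Δ_n^k = 𝔡_{n×n} ∩ Λ_n^k`. -/
def DeltaSet (n k : ℕ) : Set (Fin n → Fin n → Fin 2) :=
  {A | memD A} ∩ lambdaSet n k

/-- `γ(n,k) = |Γ_n^k|`. -/
noncomputable def gammaCard (n k : ℕ) : ℕ := (GammaSet n k).ncard

/-- `δ(n,k) = |Δ_n^k|`. -/
noncomputable def deltaCard (n k : ℕ) : ℕ := (DeltaSet n k).ncard


lemma geom_aux (s : ℕ) : ∑ i ∈ Finset.range s, 2 ^ i = 2 ^ s - 1 := by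
  induction s with
  | zero => simp
  | succ s ih =>
    rw [Finset.sum_range_succ, ih, pow_succ]
    have : 1 ≤ 2 ^ s := Nat.one_le_two_pow
    omega

lemma revsum_aux (m : ℕ) : ∑ i ∈ Finset.range m, 2 ^ (m - 1 - i) = 2 ^ m - 1 := by
  rw [← geom_aux m]
  exact Finset.sum_range_reflect (fun j => 2 ^ j) m

lemma monoBitSum {m : ℕ} (f : Fin m → Fin 2) (hf : Monotone f) :
    ∑ j : Fin m, (f j : ℕ) * 2 ^ (m - 1 - (j : ℕ)) = 2 ^ (∑ j : Fin m, (f j : ℕ)) - 1 := by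
  set s := ∑ j : Fin m, (f j : ℕ) with hs
  have hT : s = (Finset.univ.filter (fun j => f j = 1)).card := by
    rw [hs, Finset.card_filter]
    apply Finset.sum_congr rfl
    intro j _
    by_cases h : f j = 1
    · simp [h]
    · have h2 : (f j : ℕ) ≠ 1 := fun hv => h (Fin.ext hv)
      have h3 := (f j).isLt
      simp only [h, if_false]
      omega
  have hsm : s ≤ m := by
    rw [hT]
    calc (Finset.univ.filter (fun j => f j = 1)).card ≤ Finset.univ.card :=
          Finset.card_filter_le _ _
      _ = m := by simp
  have key : ∀ j : Fin m, (f j : ℕ) = if m - s ≤ (j : ℕ) then 1 else 0 := by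
    intro j
    by_cases hj : f j = 1
    · have hsub : Finset.Ici j ⊆ Finset.univ.filter (fun j' => f j' = 1) := by
        intro j' hj'
        simp only [Finset.mem_Ici] at hj'
        have h1 : f j ≤ f j' := hf hj'
        rw [hj] at h1
        have h2 : (1 : ℕ) ≤ (f j' : ℕ) := h1
        have h3 := (f j').isLt
        simp only [Finset.mem_filter, Finset.mem_univ, true_and]
        exact Fin.ext (by omega)
      have hcard : m - (j : ℕ) ≤ s := by
        rw [hT]
        calc m - (j : ℕ) = (Finset.Ici j).card := (Fin.card_Ici j).symm
          _ ≤ _ := Finset.card_le_card hsub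
      have hjm := j.isLt
      rw [if_pos (by omega), hj]
      rfl
    · have hv0 : (f j : ℕ) = 0 := by
        have h2 : (f j : ℕ) ≠ 1 := fun hv => hj (Fin.ext hv)
        have h3 := (f j).isLt
        omega
      rw [hv0, eq_comm, if_neg]
      intro hcond
      have hsub : (Finset.univ.filter (fun j' => f j' = 1)) ⊆ Finset.Ioi j := by
        intro j' hj'
        simp only [Finset.mem_filter, Finset.mem_univ, true_and] at hj'
        simp only [Finset.mem_Ioi]
        by_contra hle
        push_neg at hle
        have h1 : f j' ≤ f j := hf hle
        rw [hj'] at h1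
        have h2 : (1 : ℕ) ≤ (f j : ℕ) := h1
        omega
      have hcard : s ≤ m - 1 - (j : ℕ) := by
        rw [hT]
        calc _ ≤ (Finset.Ioi j).card := Finset.card_le_card hsub
          _ = m - 1 - (j : ℕ) := Fin.card_Ioi j
      have hjm := j.isLt
      omega
  have step : ∀ j : Fin m, (f j : ℕ) * 2 ^ (m - 1 - (j : ℕ)) =
      (if m - s ≤ (j : ℕ) then 2 ^ (m - 1 - (j : ℕ)) else 0) := by
    intro j
    rw [key j]
    split <;> simp
  rw [Finset.sum_congr rfl (fun j _ => step j),
    Fin.sum_univ_eq_sum_range (fun j => if m - s ≤ j then 2 ^ (m - 1 - j) else 0) m,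
    Finset.range_eq_Ico, ← Finset.sum_Ico_consecutive _ (Nat.zero_le (m - s)) (Nat.sub_le m s)]
  have h1 : ∑ j ∈ Finset.Ico 0 (m - s), (if m - s ≤ j then 2 ^ (m - 1 - j) else 0) = 0 := by
    apply Finset.sum_eq_zero
    intro j hj
    simp only [Finset.mem_Ico] at hj
    rw [if_neg (by omega)]
  rw [h1, zero_add, Finset.sum_Ico_eq_sum_range]
  have h2 : m - (m - s) = s := by omega
  rw [h2]
  have h3 : ∀ i ∈ Finset.range s,
      (if m - s ≤ m - s + i then 2 ^ (m - 1 - (m - s + i)) else 0) = 2 ^ (s - 1 - i) := by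
    intro i hi
    simp only [Finset.mem_range] at hi
    rw [if_pos (Nat.le_add_right _ _)]
    congr 1
    omega
  rw [Finset.sum_congr rfl h3, revsum_aux]

lemma firstRow_half {n m : ℕ} (hn : 0 < n) (A : Fin n → Fin m → Fin 2) (hA : memC A) :
    rowVal A ⟨0, hn⟩ = 2 ^ (∑ j : Fin m, (A ⟨0, hn⟩ j : ℕ)) - 1 := by
  have htot : ∑ i : Fin n, 2 ^ (n - 1 - (i : ℕ)) = 2 ^ n - 1 := by
    rw [Fin.sum_univ_eq_sum_range (fun i => 2 ^ (n - 1 - i)) n, revsum_aux]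
  have hpow : 2 ^ n = 2 ^ (n - 1) * 2 := by
    rw [← pow_succ]
    congr 1
    omega
  have hmono : Monotone (A ⟨0, hn⟩) := by
    intro j j' hle
    by_contra hlt
    push_neg at hlt
    have h2 : (A ⟨0, hn⟩ j' : ℕ) < (A ⟨0, hn⟩ j : ℕ) := hlt
    have h1 := (A ⟨0, hn⟩ j).isLt
    have hv1 : (A ⟨0, hn⟩ j : ℕ) = 1 := by omega
    have hv0 : (A ⟨0, hn⟩ j' : ℕ) = 0 := by omega
    have hle2 : colVal A j ≤ colVal A j' := hA.2 hle
    have hlow : 2 ^ (n - 1) ≤ colVal A j := by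
      have := Finset.single_le_sum (f := fun i : Fin n => (A i j : ℕ) * 2 ^ (n - 1 - (i : ℕ)))
        (fun i _ => Nat.zero_le _) (Finset.mem_univ ⟨0, hn⟩)
      simpa [colVal, hv1] using this
    have hup : colVal A j' ≤ 2 ^ n - 1 - 2 ^ (n - 1) := by
      have hb : colVal A j' ≤ ∑ i : Fin n,
          (if i = (⟨0, hn⟩ : Fin n) then 0 else 2 ^ (n - 1 - (i : ℕ))) := by
        apply Finset.sum_le_sum
        intro i _
        by_cases hi : i = (⟨0, hn⟩ : Fin n)
        · rw [if_pos hi, hi, hv0, zero_mul]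
        · rw [if_neg hi]
          have h3 := (A i j').isLt
          calc (A i j' : ℕ) * 2 ^ (n - 1 - (i : ℕ)) ≤ 1 * 2 ^ (n - 1 - (i : ℕ)) :=
                Nat.mul_le_mul_right _ (by omega)
            _ = _ := one_mul _
      have hs2 : ∑ i : Fin n, (if i = (⟨0, hn⟩ : Fin n) then (2 ^ (n - 1 - (i : ℕ)) : ℕ) else 0)
          = 2 ^ (n - 1) := by
        rw [Finset.sum_ite_eq' Finset.univ (⟨0, hn⟩ : Fin n)
          (fun i => 2 ^ (n - 1 - (i : ℕ)))]
        simp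
      have hs3 : ∑ i : Fin n, ((if i = (⟨0, hn⟩ : Fin n) then 0 else 2 ^ (n - 1 - (i : ℕ)))
          + (if i = (⟨0, hn⟩ : Fin n) then (2 ^ (n - 1 - (i : ℕ)) : ℕ) else 0)) = 2 ^ n - 1 := by
        rw [← htot]
        apply Finset.sum_congr rfl
        intro i _
        split <;> simp
      rw [Finset.sum_add_distrib, hs2] at hs3
      omega
    have hP1 : 1 ≤ 2 ^ (n - 1) := Nat.one_le_two_pow
    have hfin : 2 ^ (n - 1) ≤ 2 ^ n - 1 - 2 ^ (n - 1) :=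
      le_trans (le_trans hlow hle2) hup
    rw [hpow] at hfin
    generalize hg : 2 ^ (n - 1) = P at hfin hP1
    omega
  exact monoBitSum (A ⟨0, hn⟩) hmono

/-- Theorem: if `A ∈ 𝔠_{n×m}`, `s` is the number of ones in the first row and `t` the number
of ones in the first column, then `x_1 = 2^s - 1` and `y_1 = 2^t - 1`. -/
theorem firstRowVal_firstColVal_of_memC (n m : ℕ) (hn : 0 < n) (hm : 0 < m)
    (A : Fin n → Fin m → Fin 2) (hA : memC A) (s t : ℕ)
    (hs : s = ∑ j : Fin m, (A ⟨0, hn⟩ j : ℕ))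
    (ht : t = ∑ i : Fin n, (A i ⟨0, hm⟩ : ℕ)) :
    rowVal A ⟨0, hn⟩ = 2 ^ s - 1 ∧ colVal A ⟨0, hm⟩ = 2 ^ t - 1 := by
  constructor
  · rw [hs]
    exact firstRow_half hn A hA
  · rw [ht]
    exact firstRow_half (n := m) (m := n) hm (fun j i => A i j) ⟨hA.2, hA.1⟩
end

section
/- Let A = (a_{ij}) be an n×m binary matrix belonging to 𝔡_{n×m}, let s be the number of ones in the first row of A and t the number of ones in the first column of A. Then the row value of the first row is x_1 = (2^s − 1)·2^{m−s} = 2^m − 2^{m−s} and the column value of the first column is y_1 = (2^t − 1)·2^{n−t} = 2^n − 2^{n−t}. -/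
/-!
Because the leading bit of a binary word outweighs all the others together, comparing the values
of two columns compares their first bits; so in a matrix of `𝔡_{n×m}` the first row is
nonincreasing, i.e. of the form `1…10…0`, and likewise the first column. Such a word with `s` ones
has value `2^{m-1} + ⋯ + 2^{m-s} = 2^m - 2^{m-s}`.
-/

/-- `rowVal A i = binVal (A i)` and `colVal A j = binVal (fun i ↦ A i j)` hold by definition. -/
def binVal {M : ℕ} (f : Fin M → Fin 2) : ℕ :=
  ∑ j : Fin M, (f j : ℕ) * 2 ^ (M - 1 - (j : ℕ))

theorem binVal_succ {M : ℕ} (f : Fin (M + 1) → Fin 2) :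
    binVal f = (f 0 : ℕ) * 2 ^ M + binVal (Fin.tail f) := by
  rw [binVal, Fin.sum_univ_succ]
  congr 1
  refine Finset.sum_congr rfl fun j _ => ?_
  simp only [Fin.val_succ, Fin.tail]
  congr 2
  omega

theorem binVal_lt_two_pow {M : ℕ} (f : Fin M → Fin 2) : binVal f < 2 ^ M := by
  induction M with
  | zero => simp [binVal]
  | succ M ih =>
    have hhead : (f 0 : ℕ) ≤ 1 := Fin.is_le _
    have htail := ih (Fin.tail f)
    rw [binVal_succ, pow_succ]
    nlinarith

theorem head_le_head_of_binVal_le {M : ℕ} {f g : Fin (M + 1) → Fin 2}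
    (h : binVal f ≤ binVal g) : f 0 ≤ g 0 := by
  by_contra! hlt
  have hf : (f 0 : ℕ) = 1 := by omega
  have hg : (g 0 : ℕ) = 0 := by omega
  have := binVal_lt_two_pow (Fin.tail g)
  rw [binVal_succ f, binVal_succ g, hf, hg] at h
  omega

theorem sum_val_le_card {M : ℕ} (f : Fin M → Fin 2) : ∑ j, (f j : ℕ) ≤ M := by
  simpa using Finset.sum_le_card_nsmul Finset.univ (fun j => (f j : ℕ)) 1 fun j _ => Fin.is_le _

theorem binVal_add_two_pow_of_antitone {M : ℕ} {f : Fin M → Fin 2} (hf : Antitone f) :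
    binVal f + 2 ^ (M - ∑ j, (f j : ℕ)) = 2 ^ M := by
  induction M with
  | zero => simp [binVal]
  | succ M ih =>
    have htail := ih (f := Fin.tail f) (hf.comp_monotone Fin.strictMono_succ.monotone)
    have hle := sum_val_le_card (Fin.tail f)
    rw [binVal_succ, Fin.sum_univ_succ, show ∑ j : Fin M, (f j.succ : ℕ) = ∑ j, (Fin.tail f j : ℕ)
      from rfl]
    rcases Fin.exists_fin_two.mp ⟨f 0, rfl⟩ with h0 | h0
    · have hzero : f = fun _ => 0 := funext fun j => le_antisymm (h0 ▸ hf (Fin.zero_le j)) bot_le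
      subst hzero
      simp [binVal, Fin.tail]
    · rw [h0, Fin.val_one, one_mul, pow_succ]
      rw [show M + 1 - (1 + ∑ j, (Fin.tail f j : ℕ)) = M - ∑ j, (Fin.tail f j : ℕ) by omega]
      omega

theorem binVal_eq_of_antitone {M : ℕ} {f : Fin M → Fin 2} (hf : Antitone f) {s : ℕ}
    (hs : s = ∑ j, (f j : ℕ)) :
    binVal f = (2 ^ s - 1) * 2 ^ (M - s) ∧ binVal f = 2 ^ M - 2 ^ (M - s) := by
  have hval := binVal_add_two_pow_of_antitone hf
  have hsM : s ≤ M := hs ▸ sum_val_le_card f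
  rw [← hs] at hval
  refine ⟨?_, by omega⟩
  rw [Nat.sub_one_mul, ← pow_add, Nat.add_sub_cancel' hsM]
  omega

theorem antitone_row_zero_of_antitone_colVal {n m : ℕ} (hn : 0 < n) {A : Fin n → Fin m → Fin 2}
    (hA : Antitone (colVal A)) : Antitone (A ⟨0, hn⟩) := by
  obtain ⟨n, rfl⟩ := Nat.exists_eq_succ_of_ne_zero hn.ne'
  exact fun j j' hjj' => head_le_head_of_binVal_le (f := fun i => A i j') (hA hjj')

theorem antitone_col_zero_of_antitone_rowVal {n m : ℕ} (hm : 0 < m) {A : Fin n → Fin m → Fin 2}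
    (hA : Antitone (rowVal A)) : Antitone (fun i => A i ⟨0, hm⟩) := by
  obtain ⟨m, rfl⟩ := Nat.exists_eq_succ_of_ne_zero hm.ne'
  exact fun i i' hii' => head_le_head_of_binVal_le (f := A i') (hA hii')

/-- Theorem: if `A ∈ 𝔡_{n×m}`, `s` is the number of ones in the first row and `t` the number
of ones in the first column, then `x_1 = (2^s - 1)·2^{m-s} = 2^m - 2^{m-s}` and
`y_1 = (2^t - 1)·2^{n-t} = 2^n - 2^{n-t}`. -/
theorem firstRowVal_firstColVal_of_memD (n m : ℕ) (hn : 0 < n) (hm : 0 < m)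
    (A : Fin n → Fin m → Fin 2) (hA : memD A) (s t : ℕ)
    (hs : s = ∑ j : Fin m, (A ⟨0, hn⟩ j : ℕ))
    (ht : t = ∑ i : Fin n, (A i ⟨0, hm⟩ : ℕ)) :
    rowVal A ⟨0, hn⟩ = (2 ^ s - 1) * 2 ^ (m - s) ∧
    rowVal A ⟨0, hn⟩ = 2 ^ m - 2 ^ (m - s) ∧
    colVal A ⟨0, hm⟩ = (2 ^ t - 1) * 2 ^ (n - t) ∧
    colVal A ⟨0, hm⟩ = 2 ^ n - 2 ^ (n - t) := by
  obtain ⟨hrow, hrow'⟩ := binVal_eq_of_antitone (antitone_row_zero_of_antitone_colVal hn hA.2) hs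
  obtain ⟨hcol, hcol'⟩ := binVal_eq_of_antitone (antitone_col_zero_of_antitone_rowVal hm hA.1) ht
  exact ⟨hrow, hrow', hcol, hcol'⟩
end

section
/- γ(5,3) = 3 and δ(5,3) = 5; in particular γ(5,3) ≠ δ(5,3), so in general γ(n,k) ≠ δ(n,k). -/
-- ===== auxiliary machinery =====

/-- the ten 0/1 rows of length 5 with exactly three ones, in increasing binary value -/
def rws : Fin 10 → Fin 5 → Fin 2 :=
  ![![0,0,1,1,1],![0,1,0,1,1],![0,1,1,0,1],![0,1,1,1,0],![1,0,0,1,1],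
    ![1,0,1,0,1],![1,0,1,1,0],![1,1,0,0,1],![1,1,0,1,0],![1,1,1,0,0]]

def rv : Fin 10 → ℕ := ![7,11,13,14,19,21,22,25,26,28]

/-- `rws` as natural numbers -/
def cb : Fin 10 → Fin 5 → ℕ :=
  ![![0,0,1,1,1],![0,1,0,1,1],![0,1,1,0,1],![0,1,1,1,0],![1,0,0,1,1],
    ![1,0,1,0,1],![1,0,1,1,0],![1,1,0,0,1],![1,1,0,1,0],![1,1,1,0,0]]

def M (f : Fin 5 → Fin 10) : Fin 5 → Fin 5 → Fin 2 := fun i j => rws (f i) j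

def cvE (t0 t1 t2 t3 t4 : Fin 10) (j : Fin 5) : ℕ :=
  cb t0 j * 16 + cb t1 j * 8 + cb t2 j * 4 + cb t3 j * 2 + cb t4 j

def csE (t0 t1 t2 t3 t4 : Fin 10) (j : Fin 5) : ℕ :=
  cb t0 j + cb t1 j + cb t2 j + cb t3 j + cb t4 j

lemma cbeq : ∀ (t : Fin 10) (j : Fin 5), (rws t j : ℕ) = cb t j := by decide

lemma rowsComplete : ∀ r : Fin 5 → Fin 2, (∑ j, (r j : ℕ)) = 3 → ∃ t, r = rws t := by decide

lemma rvBridge : ∀ (f : Fin 5 → Fin 10) (i : Fin 5), rowVal (M f) i = rv (f i) := by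
  have h : ∀ t : Fin 10, (∑ j : Fin 5, (rws t j : ℕ) * 2 ^ (5 - 1 - (j : ℕ))) = rv t := by decide
  intro f i
  exact h (f i)

lemma cvBridge : ∀ (f : Fin 5 → Fin 10) (j : Fin 5),
    colVal (M f) j = cvE (f 0) (f 1) (f 2) (f 3) (f 4) j := by
  intro f j
  simp [colVal, M, cvE, Fin.sum_univ_five, cbeq,
    show (((3:Fin 5)):ℕ) = 3 from rfl, show (((4:Fin 5)):ℕ) = 4 from rfl]

lemma csBridge : ∀ (f : Fin 5 → Fin 10) (j : Fin 5),
    (∑ i, (M f i j : ℕ)) = csE (f 0) (f 1) (f 2) (f 3) (f 4) j := by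
  intro f j
  simp [M, csE, Fin.sum_univ_five, cbeq]

set_option synthInstance.maxSize 4000 in
set_option synthInstance.maxHeartbeats 4000000 in
set_option maxHeartbeats 16000000 in
set_option maxRecDepth 20000 in
lemma gammaKey : ∀ t0 t1 t2 t3 t4 : Fin 10,
    rv t0 ≤ rv t1 → rv t1 ≤ rv t2 → rv t2 ≤ rv t3 → rv t3 ≤ rv t4 →
    (∀ j : Fin 5, csE t0 t1 t2 t3 t4 j = 3) →
    (∀ j j' : Fin 5, j ≤ j' → cvE t0 t1 t2 t3 t4 j ≤ cvE t0 t1 t2 t3 t4 j') →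
    (t0 = 0 ∧ t1 = 0 ∧ t2 = 7 ∧ t3 = 8 ∧ t4 = 9) ∨
    (t0 = 0 ∧ t1 = 1 ∧ t2 = 4 ∧ t3 = 9 ∧ t4 = 9) ∨
    (t0 = 0 ∧ t1 = 1 ∧ t2 = 5 ∧ t3 = 8 ∧ t4 = 9) := by decide

set_option synthInstance.maxSize 4000 in
set_option synthInstance.maxHeartbeats 4000000 in
set_option maxHeartbeats 16000000 in
set_option maxRecDepth 20000 in
lemma deltaKey : ∀ t0 t1 t2 t3 t4 : Fin 10,
    rv t1 ≤ rv t0 → rv t2 ≤ rv t1 → rv t3 ≤ rv t2 → rv t4 ≤ rv t3 →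
    (∀ j : Fin 5, csE t0 t1 t2 t3 t4 j = 3) →
    (∀ j j' : Fin 5, j ≤ j' → cvE t0 t1 t2 t3 t4 j' ≤ cvE t0 t1 t2 t3 t4 j) →
    (t0 = 9 ∧ t1 = 4 ∧ t2 = 4 ∧ t3 = 3 ∧ t4 = 2) ∨
    (t0 = 9 ∧ t1 = 8 ∧ t2 = 4 ∧ t3 = 2 ∧ t4 = 0) ∨
    (t0 = 9 ∧ t1 = 8 ∧ t2 = 5 ∧ t3 = 1 ∧ t4 = 0) ∨
    (t0 = 9 ∧ t1 = 8 ∧ t2 = 7 ∧ t3 = 0 ∧ t4 = 0) ∨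
    (t0 = 9 ∧ t1 = 9 ∧ t2 = 4 ∧ t3 = 1 ∧ t4 = 0) := by decide

def g1 : Fin 5 → Fin 10 := ![0,0,7,8,9]
def g2 : Fin 5 → Fin 10 := ![0,1,4,9,9]
def g3 : Fin 5 → Fin 10 := ![0,1,5,8,9]
def d1 : Fin 5 → Fin 10 := ![9,4,4,3,2]
def d2 : Fin 5 → Fin 10 := ![9,8,4,2,0]
def d3 : Fin 5 → Fin 10 := ![9,8,5,1,0]
def d4 : Fin 5 → Fin 10 := ![9,8,7,0,0]
def d5 : Fin 5 → Fin 10 := ![9,9,4,1,0]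

lemma gammaSetEq : GammaSet 5 3 = {M g1, M g2, M g3} := by
  ext A
  constructor
  · rintro ⟨⟨hrm, hcm⟩, hrow, hcol⟩
    choose f hf using fun i => rowsComplete (A i) (hrow i)
    have hA : A = M f := funext fun i => hf i
    subst hA
    have hr : ∀ i i' : Fin 5, i ≤ i' → rv (f i) ≤ rv (f i') := by
      intro i i' h
      rw [← rvBridge f i, ← rvBridge f i']; exact hrm h
    have hcs : ∀ j : Fin 5, csE (f 0) (f 1) (f 2) (f 3) (f 4) j = 3 := by
      intro j; rw [← csBridge]; exact hcol j
    have hcv : ∀ j j' : Fin 5, j ≤ j' →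
        cvE (f 0) (f 1) (f 2) (f 3) (f 4) j ≤ cvE (f 0) (f 1) (f 2) (f 3) (f 4) j' := by
      intro j j' h; rw [← cvBridge, ← cvBridge]; exact hcm h
    rcases gammaKey (f 0) (f 1) (f 2) (f 3) (f 4)
        (hr 0 1 (by decide)) (hr 1 2 (by decide)) (hr 2 3 (by decide)) (hr 3 4 (by decide))
        hcs hcv with
      ⟨h0,h1,h2,h3,h4⟩ | ⟨h0,h1,h2,h3,h4⟩ | ⟨h0,h1,h2,h3,h4⟩
    · have : f = g1 := funext fun i => by fin_cases i <;> simp_all [g1] <;> rfl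
      rw [this]; left; rfl
    · have : f = g2 := funext fun i => by fin_cases i <;> simp_all [g2] <;> rfl
      rw [this]; right; left; rfl
    · have : f = g3 := funext fun i => by fin_cases i <;> simp_all [g3] <;> rfl
      rw [this]; right; right; rfl
  · intro h
    have m1 : M g1 ∈ GammaSet 5 3 := by
      refine ⟨⟨fun a b hab => ?_, fun a b hab => ?_⟩, by decide, by decide⟩
      · revert hab; revert a b; decide
      · revert hab; revert a b; decide
    have m2 : M g2 ∈ GammaSet 5 3 := by
      refine ⟨⟨fun a b hab => ?_, fun a b hab => ?_⟩, by decide, by decide⟩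
      · revert hab; revert a b; decide
      · revert hab; revert a b; decide
    have m3 : M g3 ∈ GammaSet 5 3 := by
      refine ⟨⟨fun a b hab => ?_, fun a b hab => ?_⟩, by decide, by decide⟩
      · revert hab; revert a b; decide
      · revert hab; revert a b; decide
    rcases h with h | h | h <;> subst h <;> assumption

lemma deltaSetEq : DeltaSet 5 3 = {M d1, M d2, M d3, M d4, M d5} := by
  ext A
  constructor
  · rintro ⟨⟨hrm, hcm⟩, hrow, hcol⟩
    choose f hf using fun i => rowsComplete (A i) (hrow i)
    have hA : A = M f := funext fun i => hf i
    subst hA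
    have hr : ∀ i i' : Fin 5, i ≤ i' → rv (f i') ≤ rv (f i) := by
      intro i i' h
      rw [← rvBridge f i, ← rvBridge f i']; exact hrm h
    have hcs : ∀ j : Fin 5, csE (f 0) (f 1) (f 2) (f 3) (f 4) j = 3 := by
      intro j; rw [← csBridge]; exact hcol j
    have hcv : ∀ j j' : Fin 5, j ≤ j' →
        cvE (f 0) (f 1) (f 2) (f 3) (f 4) j' ≤ cvE (f 0) (f 1) (f 2) (f 3) (f 4) j := by
      intro j j' h; rw [← cvBridge, ← cvBridge]; exact hcm h
    rcases deltaKey (f 0) (f 1) (f 2) (f 3) (f 4)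
        (hr 0 1 (by decide)) (hr 1 2 (by decide)) (hr 2 3 (by decide)) (hr 3 4 (by decide))
        hcs hcv with
      ⟨h0,h1,h2,h3,h4⟩ | ⟨h0,h1,h2,h3,h4⟩ | ⟨h0,h1,h2,h3,h4⟩ | ⟨h0,h1,h2,h3,h4⟩ | ⟨h0,h1,h2,h3,h4⟩
    · have : f = d1 := funext fun i => by fin_cases i <;> simp_all [d1] <;> rfl
      rw [this]; exact Or.inl rfl
    · have : f = d2 := funext fun i => by fin_cases i <;> simp_all [d2] <;> rfl
      rw [this]; exact Or.inr (Or.inl rfl)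
    · have : f = d3 := funext fun i => by fin_cases i <;> simp_all [d3] <;> rfl
      rw [this]; exact Or.inr (Or.inr (Or.inl rfl))
    · have : f = d4 := funext fun i => by fin_cases i <;> simp_all [d4] <;> rfl
      rw [this]; exact Or.inr (Or.inr (Or.inr (Or.inl rfl)))
    · have : f = d5 := funext fun i => by fin_cases i <;> simp_all [d5] <;> rfl
      rw [this]; exact Or.inr (Or.inr (Or.inr (Or.inr rfl)))
  · intro h
    have m1 : M d1 ∈ DeltaSet 5 3 := by
      refine ⟨⟨fun a b hab => ?_, fun a b hab => ?_⟩, by decide, by decide⟩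
      · revert hab; revert a b; decide
      · revert hab; revert a b; decide
    have m2 : M d2 ∈ DeltaSet 5 3 := by
      refine ⟨⟨fun a b hab => ?_, fun a b hab => ?_⟩, by decide, by decide⟩
      · revert hab; revert a b; decide
      · revert hab; revert a b; decide
    have m3 : M d3 ∈ DeltaSet 5 3 := by
      refine ⟨⟨fun a b hab => ?_, fun a b hab => ?_⟩, by decide, by decide⟩
      · revert hab; revert a b; decide
      · revert hab; revert a b; decide
    have m4 : M d4 ∈ DeltaSet 5 3 := by
      refine ⟨⟨fun a b hab => ?_, fun a b hab => ?_⟩, by decide, by decide⟩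
      · revert hab; revert a b; decide
      · revert hab; revert a b; decide
    have m5 : M d5 ∈ DeltaSet 5 3 := by
      refine ⟨⟨fun a b hab => ?_, fun a b hab => ?_⟩, by decide, by decide⟩
      · revert hab; revert a b; decide
      · revert hab; revert a b; decide
    rcases h with h | h | h | h | h <;> subst h <;> assumption

lemma gcard : gammaCard 5 3 = 3 := by
  have h : GammaSet 5 3 = (↑({M g1, M g2, M g3} : Finset (Fin 5 → Fin 5 → Fin 2))) := by
    rw [gammaSetEq]; simp
  rw [gammaCard, h, Set.ncard_coe_finset]
  decide

lemma dcard : deltaCard 5 3 = 5 := by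
  have h : DeltaSet 5 3 =
      (↑({M d1, M d2, M d3, M d4, M d5} : Finset (Fin 5 → Fin 5 → Fin 2))) := by
    rw [deltaSetEq]; simp
  rw [deltaCard, h, Set.ncard_coe_finset]
  decide


/-- Theorem: `γ(5,3) = 3`, `δ(5,3) = 5`, hence `γ(5,3) ≠ δ(5,3)`. -/
theorem gamma_five_three_ne_delta_five_three :
    gammaCard 5 3 = 3 ∧ deltaCard 5 3 = 5 ∧ gammaCard 5 3 ≠ deltaCard 5 3 := by
  refine ⟨gcard, dcard, ?_⟩
  rw [gcard, dcard]
  decide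
end

section
/- Let n ≥ 2 be an integer and let A = (a_{ij}) ∈ Δ_n^2. Then there exists an integer s with 2 ≤ s ≤ n such that: (i) a_{ij} = 0 whenever i ≤ s < j or j ≤ s < i; (ii) the top-left s×s submatrix B = (a_{ij})_{1≤i,j≤s} satisfies a_{ij} = 1 if and only if |i − j| = 1, or i = j = 1, or i = j = s (for s = 2 this makes B the all-ones 2×2 matrix, and for s ≥ 3 the tridiagonal 'staircase' matrix of the theorem); and (iii) if s < n then s ≤ n − 2 and the bottom-right (n−s)×(n−s) submatrix C = (a_{ij})_{s+1≤i,j≤n} belongs to Δ_{n−s}^2. -/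
lemma fin2_one {x : Fin 2} (h : (x : ℕ) = 1) : x = 1 := Fin.ext h
lemma fin2_zero {x : Fin 2} (h : (x : ℕ) = 0) : x = 0 := Fin.ext h
lemma fin2_cases (x : Fin 2) : (x : ℕ) = 0 ∨ (x : ℕ) = 1 := by omega

lemma myGeom (K : ℕ) : ∑ t ∈ Finset.range K, 2 ^ t = 2 ^ K - 1 := by
  induction K with
  | zero => simp
  | succ k ih =>
    rw [Finset.sum_range_succ, ih]
    have h1 : 1 ≤ 2 ^ k := Nat.one_le_two_pow
    have h2 : 2 ^ (k + 1) = 2 ^ k + 2 ^ k := by ring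
    omega

lemma tailBound (m j : ℕ) (h : j < m) :
    ∑ t ∈ Finset.Ico (j + 1) m, 2 ^ (m - 1 - t) = 2 ^ (m - 1 - j) - 1 := by
  rw [Finset.sum_Ico_eq_sum_range]
  have hc : ∀ t ∈ Finset.range (m - (j + 1)), 2 ^ (m - 1 - (j + 1 + t)) =
      2 ^ (m - (j + 1) - 1 - t) := by
    intro t ht
    simp only [Finset.mem_range] at ht
    congr 1
    omega
  rw [Finset.sum_congr rfl hc, Finset.sum_range_reflect (fun t => 2 ^ t) (m - (j + 1)), myGeom]
  congr 2
  omega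

lemma lexval_lt (m : ℕ) (a b : ℕ → ℕ) (ha : ∀ t, a t ≤ 1) (j : ℕ) (hjm : j < m)
    (hpre : ∀ t, t < j → a t = b t) (hj : a j < b j) :
    ∑ t ∈ Finset.range m, a t * 2 ^ (m - 1 - t) < ∑ t ∈ Finset.range m, b t * 2 ^ (m - 1 - t) := by
  have hsplit : ∀ c : ℕ → ℕ, ∑ t ∈ Finset.range m, c t * 2 ^ (m - 1 - t) =
      ((∑ t ∈ Finset.range j, c t * 2 ^ (m - 1 - t)) + c j * 2 ^ (m - 1 - j)) +
        ∑ t ∈ Finset.Ico (j + 1) m, c t * 2 ^ (m - 1 - t) := by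
    intro c
    rw [Finset.range_eq_Ico, ← Finset.sum_Ico_consecutive _ (Nat.zero_le (j + 1)) hjm,
        ← Finset.range_eq_Ico, Finset.sum_range_succ]
  rw [hsplit a, hsplit b]
  have hpre' : ∑ t ∈ Finset.range j, a t * 2 ^ (m - 1 - t) =
      ∑ t ∈ Finset.range j, b t * 2 ^ (m - 1 - t) := by
    refine Finset.sum_congr rfl fun t ht => by rw [hpre t (Finset.mem_range.mp ht)]
  have htail : ∑ t ∈ Finset.Ico (j + 1) m, a t * 2 ^ (m - 1 - t) ≤ 2 ^ (m - 1 - j) - 1 := by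
    calc ∑ t ∈ Finset.Ico (j + 1) m, a t * 2 ^ (m - 1 - t)
        ≤ ∑ t ∈ Finset.Ico (j + 1) m, 1 * 2 ^ (m - 1 - t) :=
          Finset.sum_le_sum fun t _ => Nat.mul_le_mul_right _ (ha t)
      _ = 2 ^ (m - 1 - j) - 1 := by simp [tailBound m j hjm]
  have hp1 : 1 ≤ 2 ^ (m - 1 - j) := Nat.one_le_two_pow
  have hmul : (a j + 1) * 2 ^ (m - 1 - j) ≤ b j * 2 ^ (m - 1 - j) :=
    Nat.mul_le_mul_right _ hj
  have hexp : (a j + 1) * 2 ^ (m - 1 - j) = a j * 2 ^ (m - 1 - j) + 2 ^ (m - 1 - j) := by ring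
  have hbtail : 0 ≤ ∑ t ∈ Finset.Ico (j + 1) m, b t * 2 ^ (m - 1 - t) := Nat.zero_le _
  omega

lemma rowVal_lt_of {n m : ℕ} (A : Fin n → Fin m → Fin 2) (i i' : Fin n) (j : Fin m)
    (hpre : ∀ j' : Fin m, j' < j → A i j' = A i' j') (h0 : A i j = 0) (h1 : A i' j = 1) :
    rowVal A i < rowVal A i' := by
  classical
  set a : ℕ → ℕ := fun t => if h : t < m then (A i ⟨t, h⟩ : ℕ) else 0 with hadef
  set b : ℕ → ℕ := fun t => if h : t < m then (A i' ⟨t, h⟩ : ℕ) else 0 with hbdef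
  have expa : rowVal A i = ∑ t ∈ Finset.range m, a t * 2 ^ (m - 1 - t) := by
    rw [← Fin.sum_univ_eq_sum_range (fun t => a t * 2 ^ (m - 1 - t)) m]
    refine Finset.sum_congr rfl fun t _ => by simp [hadef, t.isLt]
  have expb : rowVal A i' = ∑ t ∈ Finset.range m, b t * 2 ^ (m - 1 - t) := by
    rw [← Fin.sum_univ_eq_sum_range (fun t => b t * 2 ^ (m - 1 - t)) m]
    refine Finset.sum_congr rfl fun t _ => by simp [hbdef, t.isLt]
  rw [expa, expb]
  refine lexval_lt m a b ?_ (j : ℕ) j.isLt ?_ ?_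
  · intro t
    simp only [hadef]
    split
    · omega
    · omega
  · intro t ht
    have htm : t < m := lt_trans ht j.isLt
    simp only [hadef, hbdef, dif_pos htm]
    rw [hpre ⟨t, htm⟩ (by simpa [Fin.lt_def] using ht)]
  · simp only [hadef, hbdef, dif_pos j.isLt, Fin.eta, h0, h1]
    simp

lemma colVal_lt_of {n m : ℕ} (A : Fin n → Fin m → Fin 2) (j j' : Fin m) (i : Fin n)
    (hpre : ∀ i' : Fin n, i' < i → A i' j = A i' j') (h0 : A i j = 0) (h1 : A i j' = 1) :
    colVal A j < colVal A j' :=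
  rowVal_lt_of (fun x y => A y x) j j' i hpre h0 h1

lemma exists_one {n : ℕ} (f : Fin n → Fin 2) (hs : ∑ x, (f x : ℕ) = 2) : ∃ a, f a = 1 := by
  by_contra h
  push_neg at h
  have hz : ∀ x, (f x : ℕ) = 0 := by
    intro x
    rcases fin2_cases (f x) with h0 | h1
    · exact h0
    · exact absurd (fin2_one h1) (h x)
  rw [Finset.sum_eq_zero fun x _ => hz x] at hs
  omega

lemma exists_second {n : ℕ} (f : Fin n → Fin 2) (hs : ∑ x, (f x : ℕ) = 2) (a : Fin n)
    (hfa : f a = 1) : ∃ b, b ≠ a ∧ f b = 1 := by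
  by_contra h
  push_neg at h
  have key : ∑ x, (f x : ℕ) = (f a : ℕ) := by
    refine Finset.sum_eq_single a (fun b _ hb => ?_) (by simp)
    rcases fin2_cases (f b) with h0 | h1
    · exact h0
    · exact absurd (fin2_one h1) (h b hb)
  rw [hs, hfa] at key
  simp at key

lemma sum_two_ones {n : ℕ} (f : Fin n → Fin 2) (hs : ∑ x, (f x : ℕ) = 2)
    (a b : Fin n) (hab : a ≠ b) (hfa : f a = 1) (hfb : f b = 1)
    (c : Fin n) (hca : c ≠ a) (hcb : c ≠ b) : f c = 0 := by
  classical
  have hsub : ({a, b, c} : Finset (Fin n)) ⊆ Finset.univ := Finset.subset_univ _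
  have hle := Finset.sum_le_sum_of_subset (f := fun x => (f x : ℕ)) hsub
  rw [hs] at hle
  rw [Finset.sum_insert (by simp [hab, hca.symm]), Finset.sum_insert (by simp [hcb.symm]),
      Finset.sum_singleton, hfa, hfb] at hle
  have : (f c : ℕ) = 0 := by
    have := (fin2_cases (f c))
    simp at hle
    omega
  exact fin2_zero this

/-- Open staircase condition up to index `k`. -/
def Stair {n : ℕ} (A : Fin n → Fin n → Fin 2) (k : ℕ) : Prop :=
  ∀ i j : Fin n, ((i : ℕ) < k ∨ (j : ℕ) < k) →
    (A i j = 1 ↔ ((i : ℕ) + 1 = (j : ℕ) ∨ (j : ℕ) + 1 = (i : ℕ) ∨ ((i : ℕ) = 0 ∧ (j : ℕ) = 0)))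

section main
variable {n : ℕ} (A : Fin n → Fin n → Fin 2)

lemma rowlex (hrow : Antitone (rowVal A)) :
    ∀ i i' j : Fin n, (i : ℕ) ≤ (i' : ℕ) →
      (∀ j' : Fin n, (j' : ℕ) < (j : ℕ) → A i j' = A i' j') →
      A i j = 0 → A i' j = 1 → False := by
  intro i i' j hle hpre h0 h1
  have h2 := hrow (show i ≤ i' from hle)
  have h3 := rowVal_lt_of A i i' j (fun j' hj' => hpre j' hj') h0 h1
  omega

lemma collex (hcol : Antitone (colVal A)) :
    ∀ j j' i : Fin n, (j : ℕ) ≤ (j' : ℕ) →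
      (∀ i' : Fin n, (i' : ℕ) < (i : ℕ) → A i' j = A i' j') →
      A i j = 0 → A i j' = 1 → False := by
  intro j j' i hle hpre h0 h1
  have h2 := hcol (show j ≤ j' from hle)
  have h3 := colVal_lt_of A j j' i (fun i' hi' => hpre i' hi') h0 h1
  omega

lemma fin2_not_one {x : Fin 2} (h : ¬ x = 1) : x = 0 := by
  rcases fin2_cases x with h0 | h1
  · exact fin2_zero h0
  · exact absurd (fin2_one h1) h

lemma stair_base (hn : 2 ≤ n) (hrow : Antitone (rowVal A)) (hcol : Antitone (colVal A))
    (hr : ∀ i, ∑ j, (A i j : ℕ) = 2) (hc : ∀ j, ∑ i, (A i j : ℕ) = 2) :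
    Stair A 1 := by
  set o : Fin n := ⟨0, by omega⟩ with ho
  set e : Fin n := ⟨1, by omega⟩ with he
  -- A o o = 1
  have hAoo : A o o = 1 := by
    by_contra h
    have h0 : A o o = 0 := fin2_not_one h
    obtain ⟨a, ha⟩ := exists_one (fun i => A i o) (hc o)
    have hane : (o : ℕ) ≤ (a : ℕ) := by simp [ho]
    exact rowlex A hrow o a o hane (fun j' hj' => by simp [ho] at hj') h0 ha
  -- A o e = 1
  have hAoe : A o e = 1 := by
    by_contra h
    have h0 : A o e = 0 := fin2_not_one h
    obtain ⟨b, hbne, hb⟩ := exists_second (A o) (hr o) o hAoo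
    have hbe : b ≠ e := fun hbe => h (hbe ▸ hb)
    have hble : (e : ℕ) ≤ (b : ℕ) := by
      have h1 : (b : ℕ) ≠ 0 := fun h' => hbne (Fin.ext (by simpa [ho] using h'))
      have h2 : (b : ℕ) ≠ 1 := fun h' => hbe (Fin.ext (by simpa [he] using h'))
      simp [he]; omega
    exact collex A hcol e b o hble (fun i' hi' => by simp [ho] at hi') h0 hb
  -- A e o = 1
  have hAeo : A e o = 1 := by
    by_contra h
    have h0 : A e o = 0 := fin2_not_one h
    obtain ⟨b, hbne, hb⟩ := exists_second (fun i => A i o) (hc o) o hAoo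
    have hbe : b ≠ e := fun hbe => h (hbe ▸ hb)
    have hble : (e : ℕ) ≤ (b : ℕ) := by
      have h1 : (b : ℕ) ≠ 0 := fun h' => hbne (Fin.ext (by simpa [ho] using h'))
      have h2 : (b : ℕ) ≠ 1 := fun h' => hbe (Fin.ext (by simpa [he] using h'))
      simp [he]; omega
    exact rowlex A hrow e b o hble (fun j' hj' => by simp [ho] at hj') h0 hb
  have hoe : o ≠ e := by simp [ho, he, Fin.ext_iff]
  intro i j hij
  rcases hij with hi | hj
  · have hio : i = o := Fin.ext (by simpa [ho] using by omega)
    subst hio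
    constructor
    · intro h1
      by_contra hcond
      push_neg at hcond
      have hjo : j ≠ o := fun h' => by
        subst h'
        simp [ho] at hcond
      have hje : j ≠ e := fun h' => by
        subst h'
        simp [he, ho] at hcond
      have := sum_two_ones (A o) (hr o) o e hoe hAoo hAoe j hjo hje
      rw [this] at h1
      exact absurd h1 (by decide)
    · intro hcond
      have : (j : ℕ) = 0 ∨ (j : ℕ) = 1 := by simp [ho] at hcond; omega
      rcases this with h' | h'
      · rw [show j = o from Fin.ext (by simpa [ho] using h')]; exact hAoo
      · rw [show j = e from Fin.ext (by simpa [he] using h')]; exact hAoe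
  · have hjo : j = o := Fin.ext (by simpa [ho] using by omega)
    subst hjo
    constructor
    · intro h1
      by_contra hcond
      push_neg at hcond
      have hio : i ≠ o := fun h' => by
        subst h'
        simp [ho] at hcond
      have hie : i ≠ e := fun h' => by
        subst h'
        simp [he, ho] at hcond
      have h00 : A i o = 0 := sum_two_ones (fun i => A i o) (hc o) o e hoe hAoo hAeo i hio hie
      rw [h00] at h1
      exact absurd h1 (by decide)
    · intro hcond
      have : (i : ℕ) = 0 ∨ (i : ℕ) = 1 := by simp [ho] at hcond; omega
      rcases this with h' | h'
      · rw [show i = o from Fin.ext (by simpa [ho] using h')]; exact hAoo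
      · rw [show i = e from Fin.ext (by simpa [he] using h')]; exact hAeo

end main

section step
variable {n : ℕ} (A : Fin n → Fin n → Fin 2)

lemma stair_step (hrow : Antitone (rowVal A)) (hcol : Antitone (colVal A))
    (hr : ∀ i, ∑ j, (A i j : ℕ) = 2) (hc : ∀ j, ∑ i, (A i j : ℕ) = 2)
    (k : ℕ) (h1 : 1 ≤ k) (hk : k < n) (hs : Stair A k) :
    A ⟨k, hk⟩ ⟨k, hk⟩ = 1 ∨ (k + 1 < n ∧ Stair A (k + 1)) := by
  set K : Fin n := ⟨k, hk⟩ with hK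
  set K1 : Fin n := ⟨k - 1, by omega⟩ with hK1
  -- known entries from the open staircase
  have hKK1 : A K K1 = 1 := by
    refine (hs K K1 (Or.inr (by simp [hK1]; omega))).mpr ?_
    right; left; simp [hK, hK1]; omega
  have hK1K : A K1 K = 1 := by
    refine (hs K1 K (Or.inl (by simp [hK1]; omega))).mpr ?_
    left; simp [hK, hK1]; omega
  -- zeros in row K below k-1, and generally zeros in low columns for rows ≥ k+1
  have hlowcol : ∀ (i j : Fin n), (j : ℕ) < k → (j : ℕ) + 1 ≠ (i : ℕ) →
      (i : ℕ) + 1 ≠ (j : ℕ) → ¬((i : ℕ) = 0 ∧ (j : ℕ) = 0) → A i j = 0 := by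
    intro i j hj h1' h2' h3'
    apply fin2_not_one
    intro hone
    rcases (hs i j (Or.inr hj)).mp hone with h | h | h
    · exact h2' h
    · exact h1' h
    · exact h3' h
  have hlowrow : ∀ (i j : Fin n), (i : ℕ) < k → (j : ℕ) + 1 ≠ (i : ℕ) →
      (i : ℕ) + 1 ≠ (j : ℕ) → ¬((i : ℕ) = 0 ∧ (j : ℕ) = 0) → A i j = 0 := by
    intro i j hi h1' h2' h3'
    apply fin2_not_one
    intro hone
    rcases (hs i j (Or.inl hi)).mp hone with h | h | h
    · exact h2' h
    · exact h1' h
    · exact h3' h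
  -- the second one of row K
  obtain ⟨b, hbne, hb⟩ := exists_second (A K) (hr K) K1 hKK1
  have hbval : (b : ℕ) ≠ k - 1 := fun h' => hbne (Fin.ext (by simp [hK1, h']))
  have hbk : k ≤ (b : ℕ) := by
    by_contra hlt
    push_neg at hlt
    have := hlowcol K b hlt (by simp [hK]; omega) (by simp [hK]; omega) (by simp [hK]; omega)
    rw [this] at hb
    exact absurd hb (by decide)
  by_cases hbK : (b : ℕ) = k
  · left
    rwa [show b = K from Fin.ext (by simp [hK, hbK])] at hb
  -- now k + 1 ≤ b
  have hbk1 : (b : ℕ) = k + 1 := by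
    by_contra hne
    have hbgt : k + 1 < (b : ℕ) := by omega
    have hk1n : k + 1 < n := lt_trans hbgt b.isLt
    set E : Fin n := ⟨k + 1, hk1n⟩ with hE
    have hKE0 : A K E = 0 := by
      refine sum_two_ones (A K) (hr K) K1 b ?_ hKK1 hb E ?_ ?_
      · exact fun h' => hbval (by rw [← h'])
      · simp [hE, hK1, Fin.ext_iff] <;> omega
      · simp [hE, Fin.ext_iff] <;> omega
    refine collex A hcol E b K (by simp [hE] <;> omega) ?_ hKE0 hb
    intro i' hi'
    have hi'k : (i' : ℕ) < k := by simpa [hK] using hi'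
    rw [hlowrow i' E hi'k (by simp [hE] <;> omega) (by simp [hE] <;> omega) (by simp [hE] <;> omega),
        hlowrow i' b hi'k (by omega) (by omega) (by omega)]
  have hk1n : k + 1 < n := hbk1 ▸ b.isLt
  set E : Fin n := ⟨k + 1, hk1n⟩ with hE
  have hbE : b = E := Fin.ext (by simp [hE, hbk1])
  have hKE : A K E = 1 := hbE ▸ hb
  have hK1E : K1 ≠ E := by simp [hK1, hE, Fin.ext_iff] <;> omega
  have hrowK : ∀ j : Fin n, j ≠ K1 → j ≠ E → A K j = 0 := fun j hj1 hj2 =>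
    sum_two_ones (A K) (hr K) K1 E hK1E hKK1 hKE j hj1 hj2
  -- the second one of column K
  obtain ⟨c, hcne, hcone⟩ := exists_second (fun i => A i K) (hc K) K1 hK1K
  have hcval : (c : ℕ) ≠ k - 1 := fun h' => hcne (Fin.ext (by simp [hK1, h']))
  have hck : k + 1 ≤ (c : ℕ) := by
    rcases Nat.lt_or_ge (c : ℕ) k with hlt | hge
    · exfalso
      have h00 : A c K = 0 :=
        hlowrow c K hlt (by simp [hK]; omega) (by simp [hK]; omega) (by simp [hK]; omega)
      rw [h00] at hcone
      exact absurd hcone (by decide)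
    · rcases Nat.eq_or_lt_of_le hge with heq | hlt'
      · exfalso
        have hcK : c = K := Fin.ext (by simp [hK, heq.symm])
        have h00 : A K K = 0 := hrowK K (by simp [hK, hK1, Fin.ext_iff]; omega)
          (by simp [hK, hE, Fin.ext_iff])
        rw [hcK, h00] at hcone
        exact absurd hcone (by decide)
      · omega
  have hck1 : (c : ℕ) = k + 1 := by
    by_contra hne
    have hcgt : k + 1 < (c : ℕ) := by omega
    have hEK0 : A E K = 0 := by
      refine sum_two_ones (fun i => A i K) (hc K) K1 c ?_ hK1K hcone E ?_ ?_
      · exact fun h' => hcval (by rw [← h'])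
      · exact hK1E.symm
      · simp [hE, Fin.ext_iff] <;> omega
    refine rowlex A hrow E c K (by simp [hE] <;> omega) ?_ hEK0 hcone
    intro j' hj'
    have hj'k : (j' : ℕ) < k := by simpa [hK] using hj'
    rw [hlowcol E j' hj'k (by simp [hE] <;> omega) (by simp [hE] <;> omega) (by simp [hE] <;> omega),
        hlowcol c j' hj'k (by omega) (by omega) (by omega)]
  have hcE : c = E := Fin.ext (by simp [hE, hck1])
  have hEK : A E K = 1 := hcE ▸ hcone
  have hcolK : ∀ i : Fin n, i ≠ K1 → i ≠ E → A i K = 0 := fun i hi1 hi2 =>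
    sum_two_ones (fun i => A i K) (hc K) K1 E hK1E hK1K hEK i hi1 hi2
  right
  refine ⟨hk1n, ?_⟩
  intro i j hij
  by_cases hlow : (i : ℕ) < k ∨ (j : ℕ) < k
  · exact hs i j hlow
  push_neg at hlow
  obtain ⟨hik, hjk⟩ := hlow
  rcases (by omega : (i : ℕ) = k ∨ (j : ℕ) = k) with hik' | hjk'
  · -- row K
    have hiK : i = K := Fin.ext (by simp [hK, hik'])
    subst hiK
    constructor
    · intro hone
      by_contra hcond
      push_neg at hcond
      have hj1 : j ≠ K1 := fun h' => by
        rw [h'] at hjk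
        simp [hK1] at hjk
        omega
      have hj2 : j ≠ E := fun h' => by
        rw [h'] at hcond
        simp [hE, hK] at hcond
      rw [hrowK j hj1 hj2] at hone
      exact absurd hone (by decide)
    · intro hcond
      have hjE : j = E := by
        refine Fin.ext ?_
        simp only [hK] at hcond
        simp only [hE]
        omega
      rw [hjE]
      exact hKE
  · -- column K
    have hjK : j = K := Fin.ext (by simp [hK, hjk'])
    subst hjK
    constructor
    · intro hone
      by_contra hcond
      push_neg at hcond
      have hi1 : i ≠ K1 := fun h' => by
        rw [h'] at hik
        simp [hK1] at hik
        omega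
      have hi2 : i ≠ E := fun h' => by
        rw [h'] at hcond
        simp [hE, hK] at hcond
      rw [hcolK i hi1 hi2] at hone
      exact absurd hone (by decide)
    · intro hcond
      have hiE : i = E := by
        refine Fin.ext ?_
        simp only [hK] at hcond
        simp only [hE]
        omega
      rw [hiE]
      exact hEK

end step

lemma sum_tail {n s : ℕ} (hsn : s ≤ n) (g : Fin n → ℕ)
    (hz : ∀ j : Fin n, (j : ℕ) < s → g j = 0) :
    ∑ j : Fin n, g j = ∑ j : Fin (n - s), g ⟨s + (j : ℕ), by have := j.isLt; omega⟩ := by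
  classical
  set g' : ℕ → ℕ := fun t => if h : t < n then g ⟨t, h⟩ else 0 with hg'
  have hL : ∑ j : Fin n, g j = ∑ t ∈ Finset.range n, g' t := by
    rw [← Fin.sum_univ_eq_sum_range g' n]
    exact Finset.sum_congr rfl fun t _ => by simp [hg', t.isLt]
  have hR : ∑ j : Fin (n - s), g ⟨s + (j : ℕ), by have := j.isLt; omega⟩ =
      ∑ t ∈ Finset.range (n - s), g' (s + t) := by
    rw [← Fin.sum_univ_eq_sum_range (fun t => g' (s + t)) (n - s)]
    refine Finset.sum_congr rfl fun t _ => ?_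
    have ht : s + (t : ℕ) < n := by have := t.isLt; omega
    simp [hg', ht]
  rw [hL, hR]
  rw [Finset.range_eq_Ico, ← Finset.sum_Ico_consecutive g' (Nat.zero_le s) hsn]
  have hzero : ∑ t ∈ Finset.Ico 0 s, g' t = 0 := by
    refine Finset.sum_eq_zero fun t ht => ?_
    simp only [Finset.mem_Ico] at ht
    have htn : t < n := lt_of_lt_of_le ht.2 hsn
    simp only [hg', dif_pos htn]
    exact hz ⟨t, htn⟩ ht.2
  rw [hzero, zero_add, Finset.sum_Ico_eq_sum_range, Finset.range_eq_Ico]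

section close
variable {n : ℕ} (A : Fin n → Fin n → Fin 2)

lemma stair_close (hrow : Antitone (rowVal A)) (hcol : Antitone (colVal A))
    (hr : ∀ i, ∑ j, (A i j : ℕ) = 2) (hc : ∀ j, ∑ i, (A i j : ℕ) = 2)
    (k : ℕ) (h1 : 1 ≤ k) (hk : k < n) (hs : Stair A k) (hKK : A ⟨k, hk⟩ ⟨k, hk⟩ = 1) :
    ∃ s : ℕ, 2 ≤ s ∧ s ≤ n ∧
      (∀ i j : Fin n,
        (((i : ℕ) < s ∧ s ≤ (j : ℕ)) ∨ ((j : ℕ) < s ∧ s ≤ (i : ℕ))) → A i j = 0) ∧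
      (∀ i j : Fin n, (i : ℕ) < s → (j : ℕ) < s →
        (A i j = 1 ↔ ((i : ℕ) + 1 = (j : ℕ) ∨ (j : ℕ) + 1 = (i : ℕ) ∨
          ((i : ℕ) = 0 ∧ (j : ℕ) = 0) ∨ ((i : ℕ) = s - 1 ∧ (j : ℕ) = s - 1)))) ∧
      (∀ _ : s < n, s ≤ n - 2 ∧
        (fun (i j : Fin (n - s)) =>
            A ⟨s + (i : ℕ), by have := i.isLt; omega⟩ ⟨s + (j : ℕ), by have := j.isLt; omega⟩)
          ∈ DeltaSet (n - s) 2) := by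
  set K : Fin n := ⟨k, hk⟩ with hK
  set K1 : Fin n := ⟨k - 1, by omega⟩ with hK1
  have hKK1 : A K K1 = 1 := by
    refine (hs K K1 (Or.inr (by simp [hK1]; omega))).mpr ?_
    right; left; simp [hK, hK1]; omega
  have hK1K : A K1 K = 1 := by
    refine (hs K1 K (Or.inl (by simp [hK1]; omega))).mpr ?_
    left; simp [hK, hK1]; omega
  have hK1ne : K1 ≠ K := by simp [hK1, hK, Fin.ext_iff]; omega
  have hrowK : ∀ j : Fin n, j ≠ K1 → j ≠ K → A K j = 0 := fun j hj1 hj2 =>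
    sum_two_ones (A K) (hr K) K1 K hK1ne hKK1 hKK j hj1 hj2
  have hcolK : ∀ i : Fin n, i ≠ K1 → i ≠ K → A i K = 0 := fun i hi1 hi2 =>
    sum_two_ones (fun i => A i K) (hc K) K1 K hK1ne hK1K hKK i hi1 hi2
  have hlowcol : ∀ (i j : Fin n), (j : ℕ) < k → (j : ℕ) + 1 ≠ (i : ℕ) →
      (i : ℕ) + 1 ≠ (j : ℕ) → ¬((i : ℕ) = 0 ∧ (j : ℕ) = 0) → A i j = 0 := by
    intro i j hj h1' h2' h3'
    apply fin2_not_one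
    intro hone
    rcases (hs i j (Or.inr hj)).mp hone with h | h | h
    · exact h2' h
    · exact h1' h
    · exact h3' h
  have hlowrow : ∀ (i j : Fin n), (i : ℕ) < k → (j : ℕ) + 1 ≠ (i : ℕ) →
      (i : ℕ) + 1 ≠ (j : ℕ) → ¬((i : ℕ) = 0 ∧ (j : ℕ) = 0) → A i j = 0 := by
    intro i j hi h1' h2' h3'
    apply fin2_not_one
    intro hone
    rcases (hs i j (Or.inl hi)).mp hone with h | h | h
    · exact h2' h
    · exact h1' h
    · exact h3' h
  have hmix : ∀ i j : Fin n,
      (((i : ℕ) < k + 1 ∧ k + 1 ≤ (j : ℕ)) ∨ ((j : ℕ) < k + 1 ∧ k + 1 ≤ (i : ℕ))) →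
      A i j = 0 := by
    intro i j hcase
    rcases hcase with ⟨hi, hj⟩ | ⟨hj, hi⟩
    · rcases Nat.lt_or_ge (i : ℕ) k with hik | hik
      · exact hlowrow i j hik (by omega) (by omega) (by omega)
      · have hiK : i = K := Fin.ext (by simp [hK]; omega)
        subst hiK
        exact hrowK j (by simp [hK1, Fin.ext_iff]; omega) (by simp [hK, Fin.ext_iff]; omega)
    · rcases Nat.lt_or_ge (j : ℕ) k with hjk | hjk
      · exact hlowcol i j hjk (by omega) (by omega) (by omega)
      · have hjK : j = K := Fin.ext (by simp [hK]; omega)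
        subst hjK
        exact hcolK i (by simp [hK1, Fin.ext_iff]; omega) (by simp [hK, Fin.ext_iff]; omega)
  refine ⟨k + 1, by omega, by omega, hmix, ?_, ?_⟩
  · -- staircase description
    intro i j hi hj
    rcases Nat.lt_or_ge (i : ℕ) k with hik | hik
    · have hiff := hs i j (Or.inl hik)
      constructor
      · intro h
        rcases hiff.mp h with h' | h' | h'
        · exact Or.inl h'
        · exact Or.inr (Or.inl h')
        · exact Or.inr (Or.inr (Or.inl h'))
      · intro h
        apply hiff.mpr
        rcases h with h' | h' | h' | h'
        · exact Or.inl h'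
        · exact Or.inr (Or.inl h')
        · exact Or.inr (Or.inr h')
        · exfalso; omega
    · have hiK : i = K := Fin.ext (by simp [hK]; omega)
      subst hiK
      constructor
      · intro hone
        have hcases : j = K1 ∨ j = K := by
          by_contra hcontra
          push_neg at hcontra
          rw [hrowK j hcontra.1 hcontra.2] at hone
          exact absurd hone (by decide)
        rcases hcases with h' | h'
        · subst h'; right; left; simp [hK1, hK] <;> omega
        · subst h'; right; right; right; simp [hK] <;> omega
      · intro hcond
        have hjval : (j : ℕ) = k - 1 ∨ (j : ℕ) = k := by
          simp only [hK] at hcond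
          omega
        rcases hjval with h' | h'
        · rw [show j = K1 from Fin.ext (by simp [hK1]; omega)]
          exact hKK1
        · rw [show j = K from Fin.ext (by simp [hK]; omega)]
          exact hKK
  · -- the bottom-right block
    intro hsn
    set s : ℕ := k + 1 with hsdef
    have hz1 : ∀ (i : Fin n), s ≤ (i : ℕ) → ∀ j : Fin n, (j : ℕ) < s → (A i j : ℕ) = 0 := by
      intro i hi j hj
      rw [hmix i j (Or.inr ⟨hj, hi⟩)]
      rfl
    have hz2 : ∀ (j : Fin n), s ≤ (j : ℕ) → ∀ i : Fin n, (i : ℕ) < s → (A i j : ℕ) = 0 := by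
      intro j hj i hi
      rw [hmix i j (Or.inl ⟨hi, hj⟩)]
      rfl
    have hsle : s ≤ n := by omega
    set B : Fin (n - s) → Fin (n - s) → Fin 2 := fun i j =>
      A ⟨s + (i : ℕ), by have := i.isLt; omega⟩ ⟨s + (j : ℕ), by have := j.isLt; omega⟩ with hB
    have hBrow : ∀ i : Fin (n - s), ∑ j : Fin (n - s), (B i j : ℕ) = 2 := by
      intro i
      have hIn : s + (i : ℕ) < n := by have := i.isLt; omega
      have h2 : ∑ j : Fin (n - s), (B i j : ℕ) = ∑ j : Fin n, (A ⟨s + (i : ℕ), hIn⟩ j : ℕ) :=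
        (sum_tail hsle (fun j => (A ⟨s + (i : ℕ), hIn⟩ j : ℕ))
          (fun j hj => hz1 ⟨s + (i : ℕ), hIn⟩ (Nat.le_add_right s i) j hj)).symm
      rw [h2]
      exact hr _
    have hBcol : ∀ j : Fin (n - s), ∑ i : Fin (n - s), (B i j : ℕ) = 2 := by
      intro j
      have hJn : s + (j : ℕ) < n := by have := j.isLt; omega
      have h2 : ∑ i : Fin (n - s), (B i j : ℕ) = ∑ i : Fin n, (A i ⟨s + (j : ℕ), hJn⟩ : ℕ) :=
        (sum_tail hsle (fun i => (A i ⟨s + (j : ℕ), hJn⟩ : ℕ))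
          (fun i hi => hz2 ⟨s + (j : ℕ), hJn⟩ (Nat.le_add_right s j) i hi)).symm
      rw [h2]
      exact hc _
    have hrowValEq : ∀ (i : Fin (n - s)) (hIn : s + (i : ℕ) < n),
        rowVal B i = rowVal A ⟨s + (i : ℕ), hIn⟩ := by
      intro i hIn
      have h := sum_tail hsle (fun j => (A ⟨s + (i : ℕ), hIn⟩ j : ℕ) * 2 ^ (n - 1 - (j : ℕ)))
        (fun j hj => by
          show (A ⟨s + (i : ℕ), hIn⟩ j : ℕ) * 2 ^ (n - 1 - (j : ℕ)) = 0
          rw [hz1 ⟨s + (i : ℕ), hIn⟩ (Nat.le_add_right s i) j hj, zero_mul])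
      refine Eq.trans ?_ h.symm
      unfold rowVal
      refine Finset.sum_congr rfl fun j' _ => ?_
      have hj' := j'.isLt
      have hexp : (n - s) - 1 - (j' : ℕ) = n - 1 - (s + (j' : ℕ)) := by omega
      rw [hexp]
    have hcolValEq : ∀ (j : Fin (n - s)) (hJn : s + (j : ℕ) < n),
        colVal B j = colVal A ⟨s + (j : ℕ), hJn⟩ := by
      intro j hJn
      have h := sum_tail hsle (fun i => (A i ⟨s + (j : ℕ), hJn⟩ : ℕ) * 2 ^ (n - 1 - (i : ℕ)))
        (fun i hi => by
          show (A i ⟨s + (j : ℕ), hJn⟩ : ℕ) * 2 ^ (n - 1 - (i : ℕ)) = 0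
          rw [hz2 ⟨s + (j : ℕ), hJn⟩ (Nat.le_add_right s j) i hi, zero_mul])
      refine Eq.trans ?_ h.symm
      unfold colVal
      refine Finset.sum_congr rfl fun i' _ => ?_
      have hi' := i'.isLt
      have hexp : (n - s) - 1 - (i' : ℕ) = n - 1 - (s + (i' : ℕ)) := by omega
      rw [hexp]
    have hn2 : 2 ≤ n - s := by
      have h0 : (0 : ℕ) < n - s := by omega
      have hb := hBrow ⟨0, h0⟩
      have hle : ∑ j : Fin (n - s), (B ⟨0, h0⟩ j : ℕ) ≤ ∑ _j : Fin (n - s), 1 :=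
        Finset.sum_le_sum fun j _ => by have := (B ⟨0, h0⟩ j).isLt; omega
      simp only [Finset.sum_const, Finset.card_univ, Fintype.card_fin, smul_eq_mul, mul_one]
        at hle
      omega
    have hBanti1 : Antitone (rowVal B) := by
      intro i i' hle
      have hIn : s + (i : ℕ) < n := by have := i.isLt; omega
      have hIn' : s + (i' : ℕ) < n := by have := i'.isLt; omega
      rw [hrowValEq i hIn, hrowValEq i' hIn']
      exact hrow (show (⟨s + (i : ℕ), hIn⟩ : Fin n) ≤ ⟨s + (i' : ℕ), hIn'⟩ by
        simp only [Fin.mk_le_mk]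
        exact Nat.add_le_add_left hle s)
    have hBanti2 : Antitone (colVal B) := by
      intro j j' hle
      have hJn : s + (j : ℕ) < n := by have := j.isLt; omega
      have hJn' : s + (j' : ℕ) < n := by have := j'.isLt; omega
      rw [hcolValEq j hJn, hcolValEq j' hJn']
      exact hcol (show (⟨s + (j : ℕ), hJn⟩ : Fin n) ≤ ⟨s + (j' : ℕ), hJn'⟩ by
        simp only [Fin.mk_le_mk]
        exact Nat.add_le_add_left hle s)
    exact ⟨by omega, ⟨hBanti1, hBanti2⟩, hBrow, hBcol⟩

end close

/-- Theorem (structure of `Δ_n^2` matrices, 0-indexed): there is `s` with `2 ≤ s ≤ n` such that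
(i) all entries mixing the first `s` indices with the rest are `0`;
(ii) the top-left `s×s` block is the "staircase" matrix: `a_{ij} = 1` iff `|i-j| = 1`, or
`i = j = 0`, or `i = j = s-1` (for `s = 2` this is the all-ones `2×2` block);
(iii) if `s < n` then `s ≤ n-2` and the bottom-right `(n-s)×(n-s)` block belongs to `Δ_{n-s}^2`. -/
theorem structure_of_Delta_two (n : ℕ) (hn : 2 ≤ n) (A : Fin n → Fin n → Fin 2)
    (hA : A ∈ DeltaSet n 2) :
    ∃ s : ℕ, 2 ≤ s ∧ s ≤ n ∧
      (∀ i j : Fin n,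
        (((i : ℕ) < s ∧ s ≤ (j : ℕ)) ∨ ((j : ℕ) < s ∧ s ≤ (i : ℕ))) → A i j = 0) ∧
      (∀ i j : Fin n, (i : ℕ) < s → (j : ℕ) < s →
        (A i j = 1 ↔ ((i : ℕ) + 1 = (j : ℕ) ∨ (j : ℕ) + 1 = (i : ℕ) ∨
          ((i : ℕ) = 0 ∧ (j : ℕ) = 0) ∨ ((i : ℕ) = s - 1 ∧ (j : ℕ) = s - 1)))) ∧
      (∀ _ : s < n, s ≤ n - 2 ∧
        (fun (i j : Fin (n - s)) =>
            A ⟨s + (i : ℕ), by have := i.isLt; omega⟩ ⟨s + (j : ℕ), by have := j.isLt; omega⟩)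
          ∈ DeltaSet (n - s) 2) := by
  obtain ⟨⟨hrow, hcol⟩, hr, hc⟩ := hA
  have base := stair_base A hn hrow hcol hr hc
  have loop : ∀ d k, 1 ≤ k → ∀ hk : k < n, n - k ≤ d → Stair A k →
      (∃ s : ℕ, 2 ≤ s ∧ s ≤ n ∧
        (∀ i j : Fin n,
          (((i : ℕ) < s ∧ s ≤ (j : ℕ)) ∨ ((j : ℕ) < s ∧ s ≤ (i : ℕ))) → A i j = 0) ∧
        (∀ i j : Fin n, (i : ℕ) < s → (j : ℕ) < s →
          (A i j = 1 ↔ ((i : ℕ) + 1 = (j : ℕ) ∨ (j : ℕ) + 1 = (i : ℕ) ∨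
            ((i : ℕ) = 0 ∧ (j : ℕ) = 0) ∨ ((i : ℕ) = s - 1 ∧ (j : ℕ) = s - 1)))) ∧
        (∀ _ : s < n, s ≤ n - 2 ∧
          (fun (i j : Fin (n - s)) =>
              A ⟨s + (i : ℕ), by have := i.isLt; omega⟩ ⟨s + (j : ℕ), by have := j.isLt; omega⟩)
            ∈ DeltaSet (n - s) 2)) := by
    intro d
    induction d with
    | zero => intro k h1 hk hd _; omega
    | succ d ih =>
      intro k h1 hk hd hsk
      rcases stair_step A hrow hcol hr hc k h1 hk hsk with hclose | ⟨hk1, hs'⟩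
      · exact stair_close A hrow hcol hr hc k h1 hk hsk hclose
      · exact ih (k + 1) (by omega) hk1 (by omega) hs'
  exact loop (n - 1) 1 le_rfl (by omega) (by omega) base
end

section
/- Let n ≥ 2 be an integer and let A = (a_{ij}) ∈ Δ_n^2. Then a_{1,1} = a_{1,2} = a_{2,1} = 1, a_{i,1} = 0 for 3 ≤ i ≤ n, and a_{1,j} = 0 for 3 ≤ j ≤ n. -/
/-!
Read a row as a binary number: its leading digit is `1` exactly when its value is at least
`2 ^ (n - 1)`. Hence when the rows decrease, so do their leading digits, and the first column
is `1 … 1 0 … 0` with as many ones as its sum, which is `2` in `Δ_n^2`. The columns of `A` are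
the rows of its transpose, which gives the first row in the same way.
-/

open Finset

def binaryValue {m : ℕ} (x : Fin m → Fin 2) : ℕ :=
  ∑ j : Fin m, (x j : ℕ) * 2 ^ (m - 1 - (j : ℕ))

lemma binaryValue_succ {k : ℕ} (x : Fin (k + 1) → Fin 2) :
    binaryValue x = (x 0 : ℕ) * 2 ^ k + binaryValue (Fin.tail x) := by
  simp only [binaryValue, Fin.sum_univ_succ, Fin.val_zero, Fin.val_succ, Fin.tail]
  congr 1
  refine sum_congr rfl fun i _ => ?_
  congr 2
  omega

lemma binaryValue_lt {m : ℕ} (x : Fin m → Fin 2) : binaryValue x < 2 ^ m := by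
  induction m with
  | zero => simp [binaryValue]
  | succ k ih =>
    have htail := ih (Fin.tail x)
    have hdigit : (x 0 : ℕ) ≤ 1 := Fin.is_le (x 0)
    rw [binaryValue_succ, pow_succ]
    nlinarith

lemma pow_le_binaryValue_iff {m : ℕ} (hm : 0 < m) (x : Fin m → Fin 2) :
    2 ^ (m - 1) ≤ binaryValue x ↔ x ⟨0, hm⟩ = 1 := by
  obtain ⟨k, rfl⟩ : ∃ k, m = k + 1 := ⟨m - 1, by omega⟩
  have htail := binaryValue_lt (Fin.tail x)
  rw [binaryValue_succ, Nat.add_sub_cancel]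
  change _ ↔ x 0 = 1
  generalize x 0 = d
  fin_cases d <;> simp
  omega

lemma Fin.mem_iff_lt_card_of_isLowerSet {n : ℕ} {S : Finset (Fin n)}
    (hS : IsLowerSet (S : Set (Fin n))) (i : Fin n) : i ∈ S ↔ (i : ℕ) < #S := by
  constructor
  · intro hi
    have := card_le_card fun r hr => hS (mem_Iic.1 hr) hi
    rwa [Fin.card_Iic] at this
  · intro hlt
    by_contra hi
    have := card_le_card fun r hr => mem_Iio.2 (lt_of_not_ge fun hir => hi (hS hir hr))
    rw [Fin.card_Iio] at this
    omega

lemma sum_val_eq_card_filter_eq_one {ι : Type*} [Fintype ι] (x : ι → Fin 2) :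
    ∑ i, (x i : ℕ) = #{i | x i = 1} := by
  rw [card_filter]
  refine sum_congr rfl fun i _ => ?_
  generalize x i = d
  fin_cases d <;> rfl

section
variable {n m : ℕ} (A : Fin n → Fin m → Fin 2)

lemma rowVal_apply_eq_binaryValue (i : Fin n) : rowVal A i = binaryValue (A i) := rfl

lemma rowVal_swap : rowVal (Function.swap A) = colVal A := rfl

lemma eq_one_of_le_of_antitone_rowVal (hA : Antitone (rowVal A)) (hm : 0 < m) {r i : Fin n}
    (hri : r ≤ i) (hi : A i ⟨0, hm⟩ = 1) : A r ⟨0, hm⟩ = 1 := by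
  rw [← pow_le_binaryValue_iff hm, ← rowVal_apply_eq_binaryValue] at hi ⊢
  exact hi.trans (hA hri)

lemma eq_one_iff_lt_colSum_of_antitone_rowVal (hA : Antitone (rowVal A)) (hm : 0 < m)
    (i : Fin n) : A i ⟨0, hm⟩ = 1 ↔ (i : ℕ) < ∑ r, (A r ⟨0, hm⟩ : ℕ) := by
  have hlower : IsLowerSet (({r | A r ⟨0, hm⟩ = 1} : Finset (Fin n)) : Set (Fin n)) :=
    fun r r' hr'r hr => by
      simpa using eq_one_of_le_of_antitone_rowVal A hA hm hr'r (by simpa using hr)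
  rw [sum_val_eq_card_filter_eq_one, ← Fin.mem_iff_lt_card_of_isLowerSet hlower]
  simp

end

/-- Theorem (0-indexed): if `A ∈ Δ_n^2`, `n ≥ 2`, then `a_{00} = a_{01} = a_{10} = 1` and the
rest of the first row and first column is zero. -/
theorem corner_of_Delta_two (n : ℕ) (hn : 2 ≤ n) (A : Fin n → Fin n → Fin 2)
    (hA : A ∈ DeltaSet n 2) :
    A ⟨0, by omega⟩ ⟨0, by omega⟩ = 1 ∧
    A ⟨0, by omega⟩ ⟨1, by omega⟩ = 1 ∧
    A ⟨1, by omega⟩ ⟨0, by omega⟩ = 1 ∧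
    (∀ i : Fin n, 2 ≤ (i : ℕ) → A i ⟨0, by omega⟩ = 0) ∧
    (∀ j : Fin n, 2 ≤ (j : ℕ) → A ⟨0, by omega⟩ j = 0) := by
  obtain ⟨⟨hrow, hcol⟩, hrowSum, hcolSum⟩ := hA
  have firstCol (i : Fin n) : A i ⟨0, by omega⟩ = 1 ↔ (i : ℕ) < 2 := by
    have := eq_one_iff_lt_colSum_of_antitone_rowVal A hrow (by omega) i
    rwa [hcolSum] at this
  have firstRow (j : Fin n) : A ⟨0, by omega⟩ j = 1 ↔ (j : ℕ) < 2 := by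
    have := eq_one_iff_lt_colSum_of_antitone_rowVal (Function.swap A) (rowVal_swap A ▸ hcol)
      (by omega) j
    rwa [Function.swap, hrowSum] at this
  refine ⟨(firstCol _).2 (by simp), (firstRow _).2 (by simp), (firstCol _).2 (by simp),
    fun i hi => ?_, fun j hj => ?_⟩
  · by_contra h
    exact absurd ((firstCol i).1 (Fin.eq_one_of_ne_zero _ h)) (by omega)
  · by_contra h
    exact absurd ((firstRow j).1 (Fin.eq_one_of_ne_zero _ h)) (by omega)
end

section
/- For every integer n ≥ 2, δ(n,2) = γ(n,n−2) = the number of ordered tuples ⟨p_1, p_2, …, p_s⟩ of integers with 1 ≤ s ≤ ⌊n/2⌋, 2 ≤ p_i ≤ n for each i = 1,…,s, and p_1 + p_2 + ⋯ + p_s = n (i.e., the number of compositions of n into parts of size at least 2). -/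
namespace Aux

/-- entries of a square matrix as a total ℕ-valued function -/
def Ent {n : ℕ} (A : Fin n → Fin n → Fin 2) (i j : ℕ) : ℕ :=
  if h : i < n ∧ j < n then (A ⟨i, h.1⟩ ⟨j, h.2⟩ : ℕ) else 0

lemma Ent_le_one {n : ℕ} (A : Fin n → Fin n → Fin 2) (i j : ℕ) : Ent A i j ≤ 1 := by
  unfold Ent; split
  · exact Nat.lt_succ_iff.mp (Fin.is_lt _)
  · exact Nat.zero_le 1

lemma Ent_of_fin {n : ℕ} (A : Fin n → Fin n → Fin 2) (i j : Fin n) :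
    Ent A i j = (A i j : ℕ) := by
  unfold Ent; rw [dif_pos ⟨i.isLt, j.isLt⟩]

/-- binary value, MSB first, of a bit row of length m -/
def bval (m : ℕ) (b : ℕ → ℕ) : ℕ := ∑ j ∈ Finset.range m, b j * 2 ^ (m - 1 - j)

lemma rowVal_eq_bval {n : ℕ} (A : Fin n → Fin n → Fin 2) (i : Fin n) :
    rowVal A i = bval n (Ent A i) := by
  unfold rowVal bval
  rw [← Fin.sum_univ_eq_sum_range (fun j => Ent A i j * 2 ^ (n - 1 - j)) n]
  exact Finset.sum_congr rfl fun j _ => by rw [Ent_of_fin]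

lemma sum_range_two_pow (m : ℕ) : ∑ i ∈ Finset.range m, 2 ^ i = 2 ^ m - 1 := by
  induction m with
  | zero => simp
  | succ m ih => rw [Finset.sum_range_succ, ih]; have := Nat.one_le_two_pow (n := m); omega

lemma bval_le (m : ℕ) (b : ℕ → ℕ) (hb : ∀ j, b j ≤ 1) : bval m b ≤ 2 ^ m - 1 := by
  calc bval m b ≤ ∑ j ∈ Finset.range m, 2 ^ (m - 1 - j) := by
        apply Finset.sum_le_sum; intro j hj
        calc b j * 2 ^ (m-1-j) ≤ 1 * 2 ^ (m-1-j) := Nat.mul_le_mul_right _ (hb j)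
        _ = 2 ^ (m-1-j) := one_mul _
    _ = ∑ j ∈ Finset.range m, 2 ^ j := Finset.sum_range_reflect (fun j => 2 ^ j) m
    _ = 2 ^ m - 1 := sum_range_two_pow m

lemma bval_lt_of_zero {m s : ℕ} {b : ℕ → ℕ} (hb : ∀ j, b j ≤ 1)
    (h0 : ∀ j < s, b j = 0) : bval m b < 2 ^ (m - s) := by
  rcases le_or_gt m s with h | h
  · have hz : bval m b = 0 := by
      apply Finset.sum_eq_zero; intro j hj
      rw [h0 j (lt_of_lt_of_le (Finset.mem_range.mp hj) h)]; ring
    rw [hz]; exact Nat.two_pow_pos _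
  · have hle : bval m b ≤ 2 ^ (m - s) - 1 := by
      calc bval m b = ∑ j ∈ Finset.Ico s m, b j * 2 ^ (m - 1 - j) := by
            refine (Finset.sum_subset (fun x hx => Finset.mem_range.mpr (Finset.mem_Ico.mp hx).2) ?_).symm
            intro x hx hx2
            have : x < s := by
              rcases Finset.mem_range.mp hx with _
              by_contra hc
              exact hx2 (Finset.mem_Ico.mpr ⟨Nat.le_of_not_lt hc, Finset.mem_range.mp hx⟩)
            rw [h0 x this]; ring
        _ ≤ ∑ j ∈ Finset.Ico s m, 2 ^ (m - 1 - j) := by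
            apply Finset.sum_le_sum; intro j _
            calc b j * 2 ^ (m-1-j) ≤ 1 * 2 ^ (m-1-j) := Nat.mul_le_mul_right _ (hb j)
              _ = 2 ^ (m-1-j) := one_mul _
        _ = ∑ j ∈ Finset.range (m - s), 2 ^ (m - 1 - (s + j)) := Finset.sum_Ico_eq_sum_range (fun j => 2 ^ (m - 1 - j)) s m
        _ = ∑ j ∈ Finset.range (m - s), 2 ^ ((m - s) - 1 - j) := by
            apply Finset.sum_congr rfl; intro j hj
            congr 1; have := Finset.mem_range.mp hj; omega
        _ = ∑ j ∈ Finset.range (m - s), 2 ^ j := Finset.sum_range_reflect (fun j => 2 ^ j) (m - s)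
        _ = 2 ^ (m - s) - 1 := sum_range_two_pow _
    have := Nat.two_pow_pos (m - s); omega

lemma le_bval_of_one {m t : ℕ} {b : ℕ → ℕ} (ht : t < m) (h1 : 1 ≤ b t) :
    2 ^ (m - 1 - t) ≤ bval m b := by
  calc 2 ^ (m-1-t) = 1 * 2 ^ (m-1-t) := (one_mul _).symm
    _ ≤ b t * 2 ^ (m-1-t) := Nat.mul_le_mul_right _ h1
    _ ≤ bval m b := Finset.single_le_sum (f := fun j => b j * 2 ^ (m-1-j))
        (fun _ _ => Nat.zero_le _) (Finset.mem_range.mpr ht)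

/-- bit extraction: if the value is at least 2^(m-1-t) and all bits before t vanish,
then bit t is set. -/
lemma bit_extract {m t : ℕ} {b : ℕ → ℕ} (hb : ∀ j, b j ≤ 1) (ht : t < m)
    (hv : 2 ^ (m - 1 - t) ≤ bval m b) (h0 : ∀ j < t, b j = 0) : b t = 1 := by
  by_contra hc
  have hbt : b t = 0 := by have := hb t; omega
  have h0' : ∀ j < t + 1, b j = 0 := by
    intro j hj; rcases Nat.lt_or_ge j t with h | h
    · exact h0 j h
    · have : j = t := by omega
      rw [this]; exact hbt
  have := bval_lt_of_zero hb h0' (m := m)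
  have he : m - (t+1) = m - 1 - t := by omega
  rw [he] at this; omega

/-- value of a row with exactly two bits set -/
lemma bval_pair {m q1 q2 : ℕ} {b : ℕ → ℕ} (h12 : q1 < q2) (h2 : q2 < m)
    (hb : ∀ j, b j = if j = q1 ∨ j = q2 then 1 else 0) :
    bval m b = 2 ^ (m - 1 - q1) + 2 ^ (m - 1 - q2) := by
  have hsub : ({q1, q2} : Finset ℕ) ⊆ Finset.range m := by
    intro x hx; simp only [Finset.mem_insert, Finset.mem_singleton] at hx
    rcases hx with h | h <;> (subst h; exact Finset.mem_range.mpr (by omega))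
  have : bval m b = ∑ j ∈ ({q1, q2} : Finset ℕ), b j * 2 ^ (m - 1 - j) := by
    refine (Finset.sum_subset hsub ?_).symm
    intro x _ hx2
    simp only [Finset.mem_insert, Finset.mem_singleton] at hx2
    push_neg at hx2
    rw [hb x, if_neg (by tauto)]; ring
  rw [this, Finset.sum_pair (by omega), hb q1, hb q2, if_pos (by tauto), if_pos (by tauto)]
  ring

/-- lexicographic comparison of two-bit rows -/
lemma bval_pair_le {m q1 q2 r1 r2 : ℕ} {b c : ℕ → ℕ}
    (hq : q1 < q2) (hq2 : q2 < m) (hr : r1 < r2) (hr2 : r2 < m)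
    (hb : ∀ j, b j = if j = q1 ∨ j = q2 then 1 else 0)
    (hc : ∀ j, c j = if j = r1 ∨ j = r2 then 1 else 0)
    (hlex : q1 < r1 ∨ (q1 = r1 ∧ q2 ≤ r2)) :
    bval m c ≤ bval m b := by
  rw [bval_pair hq hq2 hb, bval_pair hr hr2 hc]
  rcases hlex with h | ⟨h1, h2⟩
  · have e1 : 2 ^ (m - 1 - r2) ≤ 2 ^ (m - 1 - r1) := Nat.pow_le_pow_right (by norm_num) (by omega)
    have e2 : 2 ^ (m - 1 - r1) + 2 ^ (m - 1 - r1) = 2 ^ (m - r1) := by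
      have : m - r1 = (m - 1 - r1) + 1 := by omega
      rw [this]; ring
    have e3 : 2 ^ (m - r1) ≤ 2 ^ (m - 1 - q1) := Nat.pow_le_pow_right (by norm_num) (by omega)
    have e4 : 1 ≤ 2 ^ (m - 1 - q2) := Nat.one_le_two_pow
    omega
  · subst h1
    have : 2 ^ (m - 1 - r2) ≤ 2 ^ (m - 1 - q2) := Nat.pow_le_pow_right (by norm_num) (by omega)
    omega



lemma Ent_oob {n : ℕ} (A : Fin n → Fin n → Fin 2) {i j : ℕ} (h : n ≤ i ∨ n ≤ j) :
    Ent A i j = 0 := by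
  unfold Ent; rw [dif_neg (by omega)]

lemma colVal_eq_bval {n : ℕ} (A : Fin n → Fin n → Fin 2) (j : Fin n) :
    colVal A j = bval n (fun i => Ent A i j) := by
  unfold colVal bval
  rw [← Fin.sum_univ_eq_sum_range (fun i => Ent A i j * 2 ^ (n - 1 - i)) n]
  exact Finset.sum_congr rfl fun i _ => by rw [Ent_of_fin]

/-- a 0/1 row summing to 2 has exactly two ones -/
lemma two_ones {n : ℕ} {f : ℕ → ℕ} (hb : ∀ j, f j ≤ 1) (h0 : ∀ j, n ≤ j → f j = 0)
    (hs : ∑ j ∈ Finset.range n, f j = 2) :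
    ∃ q1 q2, q1 < q2 ∧ q2 < n ∧ (∀ j, f j = if j = q1 ∨ j = q2 then 1 else 0) := by
  classical
  set S := (Finset.range n).filter (fun j => f j = 1) with hS
  have hcard : S.card = 2 := by
    have h1 : ∑ j ∈ Finset.range n, f j = S.card := by
      rw [hS, Finset.card_filter]
      apply Finset.sum_congr rfl; intro j _; have := hb j; split <;> omega
    omega
  obtain ⟨a, b, hab, hSab⟩ := Finset.card_eq_two.mp hcard
  have hma : a ∈ S := by rw [hSab]; simp
  have hmb : b ∈ S := by rw [hSab]; simp
  rw [hS, Finset.mem_filter, Finset.mem_range] at hma hmb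
  have hnot : ∀ j, j ≠ a → j ≠ b → f j = 0 := by
    intro j hja hjb
    rcases Nat.lt_or_ge j n with hjn | hjn
    · by_contra hc
      have hjS : j ∈ S := by
        rw [hS, Finset.mem_filter, Finset.mem_range]
        exact ⟨hjn, by have := hb j; omega⟩
      rw [hSab] at hjS; simp at hjS; tauto
    · exact h0 j hjn
  rcases Nat.lt_or_ge a b with h | h
  · refine ⟨a, b, h, hmb.1, fun j => ?_⟩
    by_cases hj : j = a ∨ j = b
    · rw [if_pos hj]; rcases hj with h | h <;> rw [h]
      · exact hma.2
      · exact hmb.2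
    · push_neg at hj; rw [if_neg (by tauto)]; exact hnot j hj.1 hj.2
  · have hba : b < a := by omega
    refine ⟨b, a, hba, hma.1, fun j => ?_⟩
    by_cases hj : j = b ∨ j = a
    · rw [if_pos hj]; rcases hj with h | h <;> rw [h]
      · exact hmb.2
      · exact hma.2
    · push_neg at hj; rw [if_neg (by tauto)]; exact hnot j hj.2 hj.1

/-- antitone from consecutive comparisons -/
lemma antitone_of_succ {n : ℕ} {f : Fin n → ℕ}
    (h : ∀ i : ℕ, ∀ hi : i + 1 < n, f ⟨i + 1, hi⟩ ≤ f ⟨i, by omega⟩) : Antitone f := by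
  have key : ∀ k (a : ℕ) (hak : a + k < n), f ⟨a + k, hak⟩ ≤ f ⟨a, by omega⟩ := by
    intro k
    induction k with
    | zero => intro a h; exact le_refl _
    | succ k ih =>
      intro a hak
      have h1 : a + k < n := by omega
      calc f ⟨a + (k+1), hak⟩ = f ⟨(a + k) + 1, by omega⟩ := rfl
        _ ≤ f ⟨a + k, h1⟩ := h _ _
        _ ≤ f ⟨a, by omega⟩ := ih a h1
  intro a b hab
  obtain ⟨a, ha⟩ := a; obtain ⟨b, hb⟩ := b
  rw [Fin.mk_le_mk] at hab
  have e : f ⟨a + (b - a), by omega⟩ ≤ f ⟨a, ha⟩ := key _ a _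
  have heq : (⟨a + (b - a), by omega⟩ : Fin n) = ⟨b, hb⟩ := by
    apply Fin.ext; simp; omega
  rwa [heq] at e


lemma rest_zero {n : ℕ} {f : ℕ → ℕ} (hb : ∀ j, f j ≤ 1) (h0 : ∀ j, n ≤ j → f j = 0)
    (hs : ∑ j ∈ Finset.range n, f j = 2) {a b : ℕ} (hab : a ≠ b)
    (ha : f a = 1) (hb' : f b = 1) : ∀ c, c ≠ a → c ≠ b → f c = 0 := by
  obtain ⟨q1, q2, h12, hq2, hdesc⟩ := two_ones hb h0 hs
  intro c hca hcb
  have ha' : a = q1 ∨ a = q2 := by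
    by_contra h; rw [hdesc a, if_neg h] at ha; omega
  have hb'' : b = q1 ∨ b = q2 := by
    by_contra h; rw [hdesc b, if_neg h] at hb'; omega
  rw [hdesc c, if_neg ?_]
  rintro (h | h) <;> omega

lemma row_sum2 {n : ℕ} {A : Fin n → Fin n → Fin 2} (hA : A ∈ DeltaSet n 2)
    {i : ℕ} (hi : i < n) : ∑ j ∈ Finset.range n, Ent A i j = 2 := by
  have h := hA.2.1 ⟨i, hi⟩
  rw [← Fin.sum_univ_eq_sum_range (fun j => Ent A i j) n]
  rw [← h]
  exact Finset.sum_congr rfl fun j _ => Ent_of_fin A ⟨i, hi⟩ j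

lemma col_sum2 {n : ℕ} {A : Fin n → Fin n → Fin 2} (hA : A ∈ DeltaSet n 2)
    {j : ℕ} (hj : j < n) : ∑ i ∈ Finset.range n, Ent A i j = 2 := by
  have h := hA.2.2 ⟨j, hj⟩
  rw [← Fin.sum_univ_eq_sum_range (fun i => Ent A i j) n]
  rw [← h]
  exact Finset.sum_congr rfl fun i _ => Ent_of_fin A i ⟨j, hj⟩

lemma rowOnes {n : ℕ} {A : Fin n → Fin n → Fin 2} (hA : A ∈ DeltaSet n 2)
    {i : ℕ} (hi : i < n) :
    ∃ q1 q2, q1 < q2 ∧ q2 < n ∧ (∀ j, Ent A i j = if j = q1 ∨ j = q2 then 1 else 0) :=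
  two_ones (fun j => Ent_le_one A i j) (fun j hj => Ent_oob A (Or.inr hj)) (row_sum2 hA hi)

lemma colOnes {n : ℕ} {A : Fin n → Fin n → Fin 2} (hA : A ∈ DeltaSet n 2)
    {j : ℕ} (hj : j < n) :
    ∃ r1 r2, r1 < r2 ∧ r2 < n ∧ (∀ i, Ent A i j = if i = r1 ∨ i = r2 then 1 else 0) :=
  two_ones (fun i => Ent_le_one A i j) (fun i hi => Ent_oob A (Or.inl hi)) (col_sum2 hA hj)

lemma row_anti {n : ℕ} {A : Fin n → Fin n → Fin 2} (hA : A ∈ DeltaSet n 2)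
    {i1 i2 : ℕ} (h : i1 ≤ i2) (h2 : i2 < n) :
    bval n (Ent A i2) ≤ bval n (Ent A i1) := by
  have hanti : Antitone (rowVal A) := hA.1.1
  have h' := hanti (show (⟨i1, by omega⟩ : Fin n) ≤ ⟨i2, h2⟩ by rw [Fin.mk_le_mk]; exact h)
  rwa [rowVal_eq_bval, rowVal_eq_bval] at h'

lemma col_anti {n : ℕ} {A : Fin n → Fin n → Fin 2} (hA : A ∈ DeltaSet n 2)
    {j1 j2 : ℕ} (h : j1 ≤ j2) (h2 : j2 < n) :
    bval n (fun i => Ent A i j2) ≤ bval n (fun i => Ent A i j1) := by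
  have hanti : Antitone (colVal A) := hA.1.2
  have h' := hanti (show (⟨j1, by omega⟩ : Fin n) ≤ ⟨j2, h2⟩ by rw [Fin.mk_le_mk]; exact h)
  rwa [colVal_eq_bval, colVal_eq_bval] at h'

/-- impossible: column j2 has a one at row t but column j1 ≤ j2 is zero on rows ≤ t -/
lemma col_lt_contra {n : ℕ} {A : Fin n → Fin n → Fin 2} (hA : A ∈ DeltaSet n 2)
    {t j1 j2 : ℕ} (hj : j1 ≤ j2) (hj2 : j2 < n) (ht : t < n)
    (hone : Ent A t j2 = 1) (hzero : ∀ i, i ≤ t → Ent A i j1 = 0) : False := by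
  have h1 : 2 ^ (n - 1 - t) ≤ bval n (fun i => Ent A i j2) :=
    le_bval_of_one ht (by omega)
  have h2 : bval n (fun i => Ent A i j1) < 2 ^ (n - (t + 1)) :=
    bval_lt_of_zero (fun i => Ent_le_one A i j1) (fun i hi => hzero i (by omega))
  have he : n - (t + 1) = n - 1 - t := by omega
  rw [he] at h2
  have h3 := col_anti hA hj hj2
  omega

/-- impossible: row i2 has a one at col t but row i1 ≤ i2 is zero on cols ≤ t -/
lemma row_lt_contra {n : ℕ} {A : Fin n → Fin n → Fin 2} (hA : A ∈ DeltaSet n 2)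
    {t i1 i2 : ℕ} (hi : i1 ≤ i2) (hi2 : i2 < n) (ht : t < n)
    (hone : Ent A i2 t = 1) (hzero : ∀ j, j ≤ t → Ent A i1 j = 0) : False := by
  have h1 : 2 ^ (n - 1 - t) ≤ bval n (Ent A i2) := le_bval_of_one ht (by omega)
  have h2 : bval n (Ent A i1) < 2 ^ (n - (t + 1)) :=
    bval_lt_of_zero (fun j => Ent_le_one A i1 j) (fun j hj => hzero j (by omega))
  have he : n - (t + 1) = n - 1 - t := by omega
  rw [he] at h2
  have h3 := row_anti hA hi hi2
  omega

/-- the first `t` rows and columns form an open staircase -/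
def OpenSt {n : ℕ} (A : Fin n → Fin n → Fin 2) (t : ℕ) : Prop :=
  ∀ i < t, (∀ j, Ent A i j = if j = i - 1 ∨ j = i + 1 then 1 else 0) ∧
    (∀ j, Ent A j i = if j = i - 1 ∨ j = i + 1 then 1 else 0)

/-- the first `p` rows and columns form a complete staircase block -/
def ClosedSt {n : ℕ} (A : Fin n → Fin n → Fin 2) (p : ℕ) : Prop :=
  ∀ i < p, (∀ j, Ent A i j = if j = i - 1 ∨ j = min (i + 1) (p - 1) then 1 else 0) ∧
    (∀ j, Ent A j i = if j = i - 1 ∨ j = min (i + 1) (p - 1) then 1 else 0)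

lemma base_open {n : ℕ} {A : Fin n → Fin n → Fin 2} (hA : A ∈ DeltaSet n 2)
    (hn : 2 ≤ n) : OpenSt A 1 := by
  obtain ⟨q1, q2, h12, hq2n, hdesc⟩ := rowOnes hA (i := 0) (by omega)
  have hq1one : Ent A 0 q1 = 1 := by rw [hdesc q1, if_pos (Or.inl rfl)]
  -- A 0 0 = 1
  have h00 : Ent A 0 0 = 1 := by
    apply bit_extract (fun i => Ent_le_one A i 0) (by omega : 0 < n) ?_ (by omega)
    calc 2 ^ (n - 1 - 0) ≤ bval n (fun i => Ent A i q1) :=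
          le_bval_of_one (by omega) (by omega)
      _ ≤ bval n (fun i => Ent A i 0) := col_anti hA (by omega) (by omega)
  have hq1 : q1 = 0 := by
    have h0m : (0 : ℕ) = q1 ∨ (0 : ℕ) = q2 := by
      by_contra h; rw [hdesc 0, if_neg h] at h00; omega
    omega
  have hq2 : q2 = 1 := by
    by_contra hc
    have h2q2 : 2 ≤ q2 := by omega
    exact col_lt_contra hA (t := 0) (j1 := 1) (j2 := q2) (by omega) hq2n (by omega)
      (by rw [hdesc q2, if_pos (Or.inr rfl)])
      (by intro i hi
          have : i = 0 := by omega
          subst this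
          rw [hdesc 1, if_neg (by omega)])
  obtain ⟨r1, r2, hr12, hr2n, hcdesc⟩ := colOnes hA (j := 0) (by omega)
  have hr1 : r1 = 0 := by
    have h0m : (0 : ℕ) = r1 ∨ (0 : ℕ) = r2 := by
      by_contra h; rw [hcdesc 0, if_neg h] at h00; omega
    omega
  have hr2 : r2 = 1 := by
    by_contra hc
    have h2r2 : 2 ≤ r2 := by omega
    exact row_lt_contra hA (t := 0) (i1 := 1) (i2 := r2) (by omega) hr2n (by omega)
      (by rw [hcdesc r2, if_pos (Or.inr rfl)])
      (by intro j hj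
          have : j = 0 := by omega
          subst this
          rw [hcdesc 1, if_neg (by omega)])
  intro i hi
  have hi0 : i = 0 := by omega
  subst hi0
  constructor
  · intro j; rw [hdesc j, hq1, hq2]
  · intro j; rw [hcdesc j, hr1, hr2]

lemma step_open {n : ℕ} {A : Fin n → Fin n → Fin 2} (hA : A ∈ DeltaSet n 2)
    {t : ℕ} (ht1 : 1 ≤ t) (htn : t < n) (hop : OpenSt A t) :
    ClosedSt A (t + 1) ∨ (t + 1 < n ∧ OpenSt A (t + 1)) := by
  -- row t: zeros before t-1, a one at t-1
  have hrtz : ∀ j, j < t - 1 → Ent A t j = 0 := by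
    intro j hj
    rw [(hop j (by omega)).2 t, if_neg (by omega)]
  have hrt1 : Ent A t (t - 1) = 1 := by
    rw [(hop (t-1) (by omega)).2 t, if_pos (by omega)]
  obtain ⟨q1, q2, h12, hq2n, hdesc⟩ := rowOnes hA htn
  have hq1 : q1 = t - 1 := by
    have e1 : Ent A t q1 = 1 := by rw [hdesc q1, if_pos (Or.inl rfl)]
    rcases Nat.lt_trichotomy q1 (t-1) with h | h | h
    · rw [hrtz q1 h] at e1; omega
    · exact h
    · have : (t - 1 : ℕ) = q1 ∨ (t - 1 : ℕ) = q2 := by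
        by_contra hc; rw [hdesc (t-1), if_neg hc] at hrt1; omega
      omega
  have hq2t : t ≤ q2 := by omega
  rcases Nat.eq_or_lt_of_le hq2t with hq2 | hq2
  · -- q2 = t : block closes with p = t + 1
    left
    -- col t has ones exactly at t-1 and t
    have hc1 : Ent A (t-1) t = 1 := by
      rw [((hop (t-1) (by omega)).1) t, if_pos (by omega)]
    have hc2 : Ent A t t = 1 := by rw [hdesc t, if_pos (by omega)]
    have hcz : ∀ i, i ≠ t - 1 → i ≠ t → Ent A i t = 0 :=
      rest_zero (fun i => Ent_le_one A i t) (fun i hi => Ent_oob A (Or.inl hi))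
        (col_sum2 hA htn) (by omega) hc1 hc2
    intro i hi
    rcases Nat.lt_or_ge i t with hit | hit
    · have hmin : min (i + 1) (t + 1 - 1) = i + 1 := by omega
      rw [hmin]
      exact hop i hit
    · have hit' : i = t := by omega
      rw [hit']
      have hmin : min (t + 1) (t + 1 - 1) = t := by omega
      rw [hmin]
      constructor
      · intro j; rw [hdesc j, hq1, ← hq2]
      · intro j
        by_cases hj : j = t - 1 ∨ j = t
        · rw [if_pos hj]
          rcases hj with h | h <;> rw [h]
          · exact hc1
          · exact hc2
        · push_neg at hj
          rw [if_neg (by tauto)]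
          exact hcz j hj.1 hj.2
  · -- q2 > t
    right
    have hq2' : q2 = t + 1 := by
      by_contra hc
      refine col_lt_contra hA (t := t) (j1 := t + 1) (j2 := q2) (by omega) hq2n htn
        (by rw [hdesc q2, if_pos (Or.inr rfl)]) ?_
      intro i hi
      rcases Nat.lt_or_ge i t with hit | hit
      · rw [(hop i hit).1 (t+1), if_neg (by omega)]
      · have hh : i = t := by omega
        rw [hh, hdesc (t+1), if_neg (by omega)]
    have htn' : t + 1 < n := by omega
    -- column t: ones exactly at t-1 and t+1
    obtain ⟨r1, r2, hr12, hr2n, hcdesc⟩ := colOnes hA htn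
    have hct1 : Ent A (t-1) t = 1 := by
      rw [(hop (t-1) (by omega)).1 t, if_pos (by omega)]
    have hctz : ∀ i, i < t - 1 → Ent A i t = 0 := by
      intro i hi
      rw [(hop i (by omega)).1 t, if_neg (by omega)]
    have hct0 : Ent A t t = 0 := by
      rw [hdesc t, if_neg (by omega)]
    have hr1 : r1 = t - 1 := by
      have e1 : Ent A r1 t = 1 := by rw [hcdesc r1, if_pos (Or.inl rfl)]
      rcases Nat.lt_trichotomy r1 (t-1) with h | h | h
      · rw [hctz r1 h] at e1; omega
      · exact h
      · have : (t - 1 : ℕ) = r1 ∨ (t - 1 : ℕ) = r2 := by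
          by_contra hc; rw [hcdesc (t-1), if_neg hc] at hct1; omega
        omega
    have hr2t : t + 1 ≤ r2 := by
      have : r2 ≠ t := by
        intro h
        have : Ent A r2 t = 1 := by rw [hcdesc r2, if_pos (Or.inr rfl)]
        rw [h, hct0] at this; omega
      omega
    have hr2' : r2 = t + 1 := by
      by_contra hc
      refine row_lt_contra hA (t := t) (i1 := t + 1) (i2 := r2) (by omega) hr2n htn
        (by rw [hcdesc r2, if_pos (Or.inr rfl)]) ?_
      intro j hj
      rcases Nat.lt_or_ge j t with hjt | hjt
      · rw [(hop j hjt).2 (t+1), if_neg (by omega)]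
      · have hh : j = t := by omega
        rw [hh, hcdesc (t+1), if_neg (by omega)]
    refine ⟨htn', ?_⟩
    intro i hi
    rcases Nat.lt_or_ge i t with hit | hit
    · exact hop i hit
    · have hh : i = t := by omega
      rw [hh]
      constructor
      · intro j; rw [hdesc j, hq1, hq2']
      · intro j; rw [hcdesc j, hr1, hr2']

lemma reach {n : ℕ} {A : Fin n → Fin n → Fin 2} (hA : A ∈ DeltaSet n 2) :
    ∀ d t, 1 ≤ t → t < n → n - t ≤ d → OpenSt A t →
    ∃ p, 2 ≤ p ∧ p ≤ n ∧ ClosedSt A p := by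
  intro d
  induction d with
  | zero => intro t h1 h2 h3 _; omega
  | succ d ih =>
    intro t h1 h2 h3 hop
    rcases step_open hA h1 h2 hop with hc | ⟨hlt, hop'⟩
    · exact ⟨t + 1, by omega, by omega, hc⟩
    · exact ih (t + 1) (by omega) hlt (by omega) hop'

/-- entries of the canonical block-diagonal staircase matrix of a composition -/
def ent : List ℕ → ℕ → ℕ → Bool
  | [], _, _ => false
  | p :: l, i, j =>
    if i < p then decide (j = i - 1 ∨ j = min (i + 1) (p - 1))
    else if j < p then false
    else ent l (i - p) (j - p)

def fmat (n : ℕ) (l : List ℕ) : Fin n → Fin n → Fin 2 :=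
  fun i j => if ent l (i : ℕ) (j : ℕ) then 1 else 0

lemma Ent_fmat {n : ℕ} (l : List ℕ) {i j : ℕ} (hi : i < n) (hj : j < n) :
    Ent (fmat n l) i j = if ent l i j then 1 else 0 := by
  unfold Ent
  rw [dif_pos ⟨hi, hj⟩]
  unfold fmat
  split <;> simp_all

lemma ent_oob : ∀ (l : List ℕ) (i j : ℕ), (l.sum ≤ i ∨ l.sum ≤ j) → ent l i j = false := by
  intro l
  induction l with
  | nil => intro i j _; rfl
  | cons p l ih =>
    intro i j hij
    have hsum : (p :: l).sum = p + l.sum := by simp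
    unfold ent
    rcases hij with h | h
    · rw [if_neg (by omega)]
      split
      · rfl
      · exact ih _ _ (Or.inl (by omega))
    · by_cases hip : i < p
      · rw [if_pos hip]
        apply decide_eq_false
        omega
      · rw [if_neg hip]
        split
        · rfl
        · exact ih _ _ (Or.inr (by omega))

lemma ent_symm : ∀ (l : List ℕ) (i j : ℕ), ent l i j = ent l j i := by
  intro l
  induction l with
  | nil => intro i j; rfl
  | cons p l ih =>
    intro i j
    unfold ent
    by_cases hip : i < p <;> by_cases hjp : j < p
    · rw [if_pos hip, if_pos hjp, decide_eq_decide]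
      omega
    · rw [if_pos hip, if_neg hjp, if_pos hip]
      exact decide_eq_false (by omega)
    · rw [if_neg hip, if_pos hjp, if_pos hjp]
      exact (decide_eq_false (by omega)).symm
    · rw [if_neg hip, if_neg hjp, if_neg hjp, if_neg hip]
      exact ih _ _

/-- positions of the two ones in row `i` -/
def pos1 : List ℕ → ℕ → ℕ
  | [], i => i
  | p :: l, i => if i < p then i - 1 else p + pos1 l (i - p)

def pos2 : List ℕ → ℕ → ℕ
  | [], i => i + 1
  | p :: l, i => if i < p then min (i + 1) (p - 1) else p + pos2 l (i - p)

lemma pos_bounds : ∀ (l : List ℕ), (∀ p ∈ l, 2 ≤ p) → ∀ i < l.sum,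
    pos1 l i < pos2 l i ∧ pos2 l i < l.sum := by
  intro l
  induction l with
  | nil => intro _ i hi; simp at hi
  | cons p l ih =>
    intro hl i hi
    have hp : 2 ≤ p := hl p (by simp)
    have hsum : (p :: l).sum = p + l.sum := by simp
    unfold pos1 pos2
    by_cases hip : i < p
    · rw [if_pos hip, if_pos hip]
      omega
    · rw [if_neg hip, if_neg hip]
      have := ih (fun q hq => hl q (by simp [hq])) (i - p) (by omega)
      omega

lemma ent_desc : ∀ (l : List ℕ), (∀ p ∈ l, 2 ≤ p) → ∀ i < l.sum, ∀ j,
    ent l i j = decide (j = pos1 l i ∨ j = pos2 l i) := by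
  intro l
  induction l with
  | nil => intro _ i hi; simp at hi
  | cons p l ih =>
    intro hl i hi j
    have hp : 2 ≤ p := hl p (by simp)
    have hsum : (p :: l).sum = p + l.sum := by simp
    unfold ent pos1 pos2
    by_cases hip : i < p
    · rw [if_pos hip, if_pos hip, if_pos hip]
    · rw [if_neg hip, if_neg hip, if_neg hip]
      have hb := pos_bounds l (fun q hq => hl q (by simp [hq])) (i - p) (by omega)
      by_cases hjp : j < p
      · rw [if_pos hjp]
        exact (decide_eq_false (by omega)).symm
      · rw [if_neg hjp]
        rw [ih (fun q hq => hl q (by simp [hq])) (i - p) (by omega) (j - p),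
          decide_eq_decide]
        omega

lemma pos_mono : ∀ (l : List ℕ), (∀ p ∈ l, 2 ≤ p) → ∀ i, i + 1 < l.sum →
    pos1 l i < pos1 l (i + 1) ∨
      (pos1 l i = pos1 l (i + 1) ∧ pos2 l i ≤ pos2 l (i + 1)) := by
  intro l
  induction l with
  | nil => intro _ i hi; simp at hi
  | cons p l ih =>
    intro hl i hi
    have hp : 2 ≤ p := hl p (by simp)
    have hsum : (p :: l).sum = p + l.sum := by simp
    unfold pos1 pos2
    by_cases hip : i + 1 < p
    · have hip0 : i < p := by omega
      simp only [if_pos hip, if_pos hip0]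
      omega
    · by_cases hip' : i < p
      · -- i + 1 = p
        have hie : i + 1 = p := by omega
        have hnp : ¬ (i + 1 < p) := by omega
        simp only [if_pos hip', if_neg hnp]
        have hb := pos_bounds l (fun q hq => hl q (by simp [hq])) 0
        left
        omega
      · have hnp : ¬ (i + 1 < p) := by omega
        simp only [if_neg hip', if_neg hnp]
        have heq : i + 1 - p = (i - p) + 1 := by omega
        rw [heq]
        have := ih (fun q hq => hl q (by simp [hq])) (i - p) (by omega)
        omega

lemma finsum_row {m : ℕ} (A : Fin m → Fin m → Fin 2) (i : Fin m) :
    ∑ j, (A i j : ℕ) = ∑ j ∈ Finset.range m, Ent A i j := by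
  rw [← Fin.sum_univ_eq_sum_range (fun j => Ent A i j) m]
  exact Finset.sum_congr rfl fun j _ => (Ent_of_fin A i j).symm

lemma finsum_col {m : ℕ} (A : Fin m → Fin m → Fin 2) (j : Fin m) :
    ∑ i, (A i j : ℕ) = ∑ i ∈ Finset.range m, Ent A i j := by
  rw [← Fin.sum_univ_eq_sum_range (fun i => Ent A i j) m]
  exact Finset.sum_congr rfl fun i _ => (Ent_of_fin A i j).symm

lemma shift_sum {n p : ℕ} (f : ℕ → ℕ) (hz : ∀ j < p, f j = 0) (hpn : p ≤ n) :
    ∑ j ∈ Finset.range n, f j = ∑ j ∈ Finset.range (n - p), f (p + j) := by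
  rw [← Finset.sum_Ico_eq_sum_range]
  refine (Finset.sum_subset (fun x hx => Finset.mem_range.mpr (Finset.mem_Ico.mp hx).2) ?_).symm
  intro x hx hx2
  apply hz
  have h1 := Finset.mem_range.mp hx
  by_contra hc
  exact hx2 (Finset.mem_Ico.mpr ⟨by omega, h1⟩)

lemma bval_shift {n p : ℕ} (f g : ℕ → ℕ) (hz : ∀ j < p, f j = 0)
    (hfg : ∀ j, g j = f (p + j)) (hpn : p ≤ n) :
    bval n f = bval (n - p) g := by
  unfold bval
  rw [shift_sum (fun j => f j * 2 ^ (n - 1 - j)) (fun j hj => by simp [hz j hj]) hpn]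
  apply Finset.sum_congr rfl
  intro j hj
  have hjm := Finset.mem_range.mp hj
  rw [hfg j]
  congr 2
  omega

lemma pair_sum {n a b : ℕ} (hab : a ≠ b) (ha : a < n) (hb : b < n) :
    (∑ j ∈ Finset.range n, if j = a ∨ j = b then 1 else 0) = 2 := by
  classical
  rw [← Finset.card_filter]
  have hfil : (Finset.range n).filter (fun j => j = a ∨ j = b) = {a, b} := by
    ext x
    simp only [Finset.mem_filter, Finset.mem_range, Finset.mem_insert, Finset.mem_singleton]
    constructor
    · rintro ⟨_, h⟩; exact h
    · rintro (rfl | rfl)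
      · exact ⟨ha, Or.inl rfl⟩
      · exact ⟨hb, Or.inr rfl⟩
  rw [hfil, Finset.card_insert_of_notMem (by simp [hab]), Finset.card_singleton]

lemma Ent_fmat_desc {n : ℕ} {l : List ℕ} (hl : ∀ p ∈ l, 2 ≤ p) (hsum : l.sum = n)
    {i : ℕ} (hi : i < n) (j : ℕ) :
    Ent (fmat n l) i j = if j = pos1 l i ∨ j = pos2 l i then 1 else 0 := by
  rcases Nat.lt_or_ge j n with hj | hj
  · rw [Ent_fmat l hi hj, ent_desc l hl i (by omega) j]
    by_cases h : j = pos1 l i ∨ j = pos2 l i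
    · simp [h]
    · simp [h]
  · have hb := pos_bounds l hl i (by omega)
    rw [Ent_oob _ (Or.inr hj), if_neg (by omega)]

lemma Ent_symm_pt {n : ℕ} {A : Fin n → Fin n → Fin 2}
    (hsymm : ∀ i j : Fin n, A i j = A j i) (i j : ℕ) : Ent A i j = Ent A j i := by
  unfold Ent
  by_cases h : i < n ∧ j < n
  · rw [dif_pos h, dif_pos ⟨h.2, h.1⟩, hsymm]
  · rw [dif_neg h, dif_neg (by tauto)]

lemma fmat_mem {n : ℕ} {l : List ℕ} (hl : ∀ p ∈ l, 2 ≤ p) (hsum : l.sum = n) :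
    fmat n l ∈ DeltaSet n 2 := by
  have hsymm : ∀ i j : Fin n, fmat n l i j = fmat n l j i := by
    intro i j; unfold fmat; rw [ent_symm]
  have hrow : ∀ i : ℕ, i < n → ∑ j ∈ Finset.range n, Ent (fmat n l) i j = 2 := by
    intro i hi
    obtain ⟨h1, h2⟩ := pos_bounds l hl i (by omega)
    calc ∑ j ∈ Finset.range n, Ent (fmat n l) i j
        = ∑ j ∈ Finset.range n, (if j = pos1 l i ∨ j = pos2 l i then 1 else 0) :=
          Finset.sum_congr rfl fun j _ => Ent_fmat_desc hl hsum hi j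
      _ = 2 := pair_sum (by omega) (by omega) (by omega)
  have hAnti : Antitone (rowVal (fmat n l)) := by
    apply antitone_of_succ
    intro i hi1
    rw [rowVal_eq_bval, rowVal_eq_bval]
    obtain ⟨b1, b2⟩ := pos_bounds l hl i (by omega)
    obtain ⟨c1, c2⟩ := pos_bounds l hl (i + 1) (by omega)
    exact bval_pair_le b1 (by omega) c1 (by omega)
      (Ent_fmat_desc hl hsum (by omega)) (Ent_fmat_desc hl hsum (by omega))
      (pos_mono l hl i (by omega))
  have hcv : colVal (fmat n l) = rowVal (fmat n l) := by
    funext j; unfold colVal rowVal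
    exact Finset.sum_congr rfl fun i _ => by rw [hsymm]
  refine ⟨⟨hAnti, by rw [hcv]; exact hAnti⟩, ?_, ?_⟩
  · intro i
    rw [finsum_row]
    exact hrow i i.isLt
  · intro j
    rw [finsum_col]
    calc ∑ i ∈ Finset.range n, Ent (fmat n l) i j
        = ∑ i ∈ Finset.range n, Ent (fmat n l) j i :=
          Finset.sum_congr rfl fun i _ => Ent_symm_pt hsymm i j
      _ = 2 := hrow j j.isLt

lemma struct {n : ℕ} : ∀ A : Fin n → Fin n → Fin 2, A ∈ DeltaSet n 2 →
    ∃ l : List ℕ, (∀ p ∈ l, 2 ≤ p) ∧ l.sum = n ∧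
      ∀ i j : ℕ, Ent A i j = if ent l i j then 1 else 0 := by
  induction n using Nat.strong_induction_on with
  | _ n ih =>
  intro A hA
  rcases Nat.lt_or_ge n 2 with hn | hn
  · have hn0 : n = 0 ∨ n = 1 := by omega
    rcases hn0 with h | h
    · subst h
      refine ⟨[], by simp, by simp, fun i j => ?_⟩
      rw [Ent_oob A (Or.inl (by omega))]; rfl
    · subst h
      exfalso
      have h1 := row_sum2 hA (i := 0) (by omega)
      rw [Finset.sum_range_one] at h1
      have := Ent_le_one A 0 0
      omega
  · obtain ⟨p, hp2, hpn, hcl⟩ := reach hA (n - 1) 1 le_rfl (by omega) (by omega)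
      (base_open hA hn)
    have hz1 : ∀ i j : ℕ, i < p → p ≤ j → Ent A i j = 0 := by
      intro i j hi hj
      rw [(hcl i hi).1 j, if_neg (by omega)]
    have hz2 : ∀ i j : ℕ, p ≤ i → j < p → Ent A i j = 0 := by
      intro i j hi hj
      rw [(hcl j hj).2 i, if_neg (by omega)]
    set m := n - p with hm
    set A' : Fin m → Fin m → Fin 2 :=
      fun i j => if Ent A (p + i) (p + j) = 1 then 1 else 0 with hA'
    have hE : ∀ i j : ℕ, Ent A' i j = Ent A (p + i) (p + j) := by
      intro i j
      rcases Nat.lt_or_ge i m with hi | hi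
      · rcases Nat.lt_or_ge j m with hj | hj
        · have h01 : Ent A (p + i) (p + j) = 0 ∨ Ent A (p + i) (p + j) = 1 := by
            have := Ent_le_one A (p + i) (p + j); omega
          have e1 : Ent A' i j = ((A' ⟨i, hi⟩ ⟨j, hj⟩ : Fin 2) : ℕ) :=
            Ent_of_fin A' ⟨i, hi⟩ ⟨j, hj⟩
          have e2 : A' ⟨i, hi⟩ ⟨j, hj⟩ = if Ent A (p + i) (p + j) = 1 then 1 else 0 := by
            simp only [hA']
          rw [e1, e2]
          rcases h01 with h | h <;> rw [h] <;> simp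
        · rw [Ent_oob A' (Or.inr hj), Ent_oob A (Or.inr (by omega))]
      · rw [Ent_oob A' (Or.inl hi), Ent_oob A (Or.inl (by omega))]
    have hA'mem : A' ∈ DeltaSet m 2 := by
      have hrshift : ∀ i : ℕ, i < m → bval m (Ent A' i) = bval n (Ent A (p + i)) := by
        intro i hi
        exact (bval_shift (Ent A (p + i)) (Ent A' i)
          (fun j hj => hz2 (p + i) j (by omega) hj) (fun j => hE i j) (by omega)).symm
      have hcshift : ∀ j : ℕ, j < m →
          bval m (fun i => Ent A' i j) = bval n (fun i => Ent A i (p + j)) := by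
        intro j hj
        exact (bval_shift (fun i => Ent A i (p + j)) (fun i => Ent A' i j)
          (fun i hi => hz1 i (p + j) hi (by omega)) (fun i => hE i j) (by omega)).symm
      refine ⟨⟨?_, ?_⟩, ?_, ?_⟩
      · apply antitone_of_succ
        intro i hi1
        rw [rowVal_eq_bval, rowVal_eq_bval]
        show bval m (Ent A' (i+1)) ≤ bval m (Ent A' i)
        rw [hrshift i (by omega), hrshift (i+1) (by omega)]
        exact row_anti hA (by omega) (by omega)
      · apply antitone_of_succ
        intro j hj1
        rw [colVal_eq_bval, colVal_eq_bval]
        show bval m (fun i => Ent A' i (j+1)) ≤ bval m (fun i => Ent A' i j)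
        rw [hcshift j (by omega), hcshift (j+1) (by omega)]
        exact col_anti hA (by omega) (by omega)
      · intro i
        rw [finsum_row]
        calc ∑ j ∈ Finset.range m, Ent A' i j
            = ∑ j ∈ Finset.range m, Ent A (p + i) (p + j) :=
              Finset.sum_congr rfl fun j _ => hE i j
          _ = ∑ j ∈ Finset.range n, Ent A (p + i) j := by
              rw [shift_sum (Ent A (p + i)) (fun j hj => hz2 (p + i) j (by omega) hj)
                (by omega)]
          _ = 2 := row_sum2 hA (by omega)
      · intro j
        rw [finsum_col]
        calc ∑ i ∈ Finset.range m, Ent A' i j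
            = ∑ i ∈ Finset.range m, Ent A (p + i) (p + j) :=
              Finset.sum_congr rfl fun i _ => hE i j
          _ = ∑ i ∈ Finset.range n, Ent A i (p + j) := by
              rw [shift_sum (fun i => Ent A i (p + j))
                (fun i hi => hz1 i (p + j) hi (by omega)) (by omega)]
          _ = 2 := col_sum2 hA (by omega)
    obtain ⟨l', hl', hsum', hdesc'⟩ := ih m (by omega) A' hA'mem
    refine ⟨p :: l', ?_, by simp only [List.sum_cons, hsum']; omega, ?_⟩
    · intro q hq
      rcases List.mem_cons.mp hq with h | h
      · omega
      · exact hl' q h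
    · intro i j
      show Ent A i j = if ent (p :: l') i j then 1 else 0
      unfold ent
      by_cases hip : i < p
      · rw [if_pos hip, (hcl i hip).1 j]
        by_cases h : j = i - 1 ∨ j = min (i + 1) (p - 1)
        · simp [h]
        · simp [h]
      · rw [if_neg hip]
        by_cases hjp : j < p
        · rw [if_pos hjp, hz2 i j (by omega) hjp]
          rfl
        · rw [if_neg hjp]
          have he : Ent A i j = Ent A (p + (i - p)) (p + (j - p)) := by
            congr 1 <;> omega
          rw [he, ← hE, hdesc']

lemma ent_cons_lt {p : ℕ} {t : List ℕ} {i j : ℕ} (h : i < p) :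
    ent (p :: t) i j = decide (j = i - 1 ∨ j = min (i + 1) (p - 1)) := by
  unfold ent; rw [if_pos h]

lemma ent_inj : ∀ l l' : List ℕ, (∀ p ∈ l, 2 ≤ p) → (∀ p ∈ l', 2 ≤ p) →
    l.sum = l'.sum → (∀ i j, ent l i j = ent l' i j) → l = l' := by
  intro l
  induction l with
  | nil =>
    intro l' _ hl' hs _
    cases l' with
    | nil => rfl
    | cons q t' => exfalso; have := hl' q (by simp); simp at hs; omega
  | cons p t ih =>
    intro l' hl hl' hs hent
    have hp : 2 ≤ p := hl p (by simp)
    cases l' with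
    | nil => exfalso; simp at hs; omega
    | cons q t' =>
      have hq : 2 ≤ q := hl' q (by simp)
      have key : ∀ (a b : ℕ) (u v : List ℕ), 2 ≤ a → 2 ≤ b → a < b →
          ent (a :: u) (a - 1) (a - 1) = true ∧ ent (b :: v) (a - 1) (a - 1) = false := by
        intro a b u v ha hb hab
        rw [ent_cons_lt (by omega), ent_cons_lt (by omega)]
        exact ⟨decide_eq_true (by omega), decide_eq_false (by omega)⟩
      have hpq : p = q := by
        rcases Nat.lt_trichotomy p q with h | h | h
        · obtain ⟨e1, e2⟩ := key p q t t' hp hq h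
          rw [hent (p - 1) (p - 1)] at e1
          rw [e1] at e2
          exact absurd e2 (by simp)
        · exact h
        · obtain ⟨e1, e2⟩ := key q p t' t hq hp h
          rw [← hent (q - 1) (q - 1)] at e1
          rw [e1] at e2
          exact absurd e2 (by simp)
      subst hpq
      have ht : t = t' := by
        refine ih t' (fun x hx => hl x (by simp [hx])) (fun x hx => hl' x (by simp [hx]))
          (by simp at hs; omega) ?_
        intro i j
        have hthis := hent (p + i) (p + j)
        have h1 : ¬ (p + i < p) := by omega
        have h2 : ¬ (p + j < p) := by omega
        unfold ent at hthis
        rw [if_neg h1, if_neg h2, if_neg h1, if_neg h2, Nat.add_sub_cancel_left,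
          Nat.add_sub_cancel_left] at hthis
        exact hthis
      rw [ht]

lemma delta_eq_image {n : ℕ} :
    DeltaSet n 2 = fmat n '' {l : List ℕ | (∀ p ∈ l, 2 ≤ p) ∧ l.sum = n} := by
  ext A
  constructor
  · intro hA
    obtain ⟨l, hl, hsum, hdesc⟩ := struct A hA
    refine ⟨l, ⟨hl, hsum⟩, ?_⟩
    funext i j
    apply Fin.val_injective
    have h1 : Ent (fmat n l) (i : ℕ) (j : ℕ) = ((fmat n l i j : Fin 2) : ℕ) :=
      Ent_of_fin (fmat n l) i j
    have h2 : Ent A (i : ℕ) (j : ℕ) = ((A i j : Fin 2) : ℕ) := Ent_of_fin A i j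
    rw [← h1, ← h2, hdesc, Ent_fmat l i.isLt j.isLt]
  · rintro ⟨l, ⟨hl, hsum⟩, rfl⟩
    exact fmat_mem hl hsum

lemma fmat_injOn {n : ℕ} :
    Set.InjOn (fmat n) {l : List ℕ | (∀ p ∈ l, 2 ≤ p) ∧ l.sum = n} := by
  intro l1 h1 l2 h2 heq
  have e1 : l1.sum = n := h1.2
  have e2 : l2.sum = n := h2.2
  apply ent_inj l1 l2 h1.1 h2.1 (by rw [e1, e2])
  intro i j
  rcases Nat.lt_or_ge i n with hi | hi
  · rcases Nat.lt_or_ge j n with hj | hj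
    · have e := congrFun (congrFun heq ⟨i, hi⟩) ⟨j, hj⟩
      unfold fmat at e
      cases hb1 : ent l1 i j <;> cases hb2 : ent l2 i j <;> simp_all
    · rw [ent_oob l1 i j (Or.inr (by omega)), ent_oob l2 i j (Or.inr (by omega))]
  · rw [ent_oob l1 i j (Or.inl (by omega)), ent_oob l2 i j (Or.inl (by omega))]

lemma deltaCard_eq_lists {n : ℕ} :
    deltaCard n 2 = Set.ncard {l : List ℕ | (∀ p ∈ l, 2 ≤ p) ∧ l.sum = n} := by
  unfold deltaCard
  rw [delta_eq_image, Set.ncard_image_of_injOn fmat_injOn]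

lemma two_mul_len_le : ∀ l : List ℕ, (∀ p ∈ l, 2 ≤ p) → 2 * l.length ≤ l.sum := by
  intro l
  induction l with
  | nil => simp
  | cons p t ih =>
    intro h
    have h1 := h p (by simp)
    have h2 := ih (fun x hx => h x (by simp [hx]))
    simp only [List.length_cons, List.sum_cons]
    omega

lemma lists_eq {n : ℕ} (hn : 2 ≤ n) :
    {l : List ℕ | 1 ≤ l.length ∧ l.length ≤ n / 2 ∧
        (∀ p ∈ l, 2 ≤ p ∧ p ≤ n) ∧ l.sum = n} =
      {l : List ℕ | (∀ p ∈ l, 2 ≤ p) ∧ l.sum = n} := by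
  ext l
  simp only [Set.mem_setOf_eq]
  constructor
  · rintro ⟨_, _, h3, h4⟩
    exact ⟨fun p hp => (h3 p hp).1, h4⟩
  · rintro ⟨h1, h2⟩
    have hlen := two_mul_len_le l h1
    refine ⟨?_, by omega, fun p hp => ⟨h1 p hp, ?_⟩, h2⟩
    · rcases l with _ | ⟨a, t⟩
      · simp at h2; omega
      · simp
    · calc p ≤ l.sum := List.single_le_sum (fun x _ => Nat.zero_le x) p hp
        _ = n := h2

/-- complementation -/
def cmpl {n : ℕ} (A : Fin n → Fin n → Fin 2) : Fin n → Fin n → Fin 2 :=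
  fun i j => 1 - A i j

lemma cmpl_coe : ∀ a : Fin 2, ((1 - a : Fin 2) : ℕ) = 1 - (a : ℕ) := by decide

lemma cmpl_cmpl {n : ℕ} (A : Fin n → Fin n → Fin 2) : cmpl (cmpl A) = A := by
  funext i j
  have : ∀ a : Fin 2, 1 - (1 - a) = a := by decide
  exact this (A i j)

lemma rowVal_le_max {n : ℕ} (A : Fin n → Fin n → Fin 2) (i : Fin n) :
    rowVal A i ≤ 2 ^ n - 1 := by
  rw [rowVal_eq_bval]; exact bval_le n _ (fun j => Ent_le_one A i j)

lemma colVal_le_max {n : ℕ} (A : Fin n → Fin n → Fin 2) (j : Fin n) :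
    colVal A j ≤ 2 ^ n - 1 := by
  rw [colVal_eq_bval]; exact bval_le n _ (fun i => Ent_le_one A i j)

lemma sum_weights {n : ℕ} : ∑ j : Fin n, 2 ^ (n - 1 - (j : ℕ)) = 2 ^ n - 1 := by
  rw [Fin.sum_univ_eq_sum_range (fun j => 2 ^ (n - 1 - j)) n]
  have := Finset.sum_range_reflect (fun j => 2 ^ j) n
  rw [this, sum_range_two_pow]

lemma rowVal_cmpl {n : ℕ} (A : Fin n → Fin n → Fin 2) (i : Fin n) :
    rowVal (cmpl A) i = (2 ^ n - 1) - rowVal A i := by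
  have hadd : rowVal (cmpl A) i + rowVal A i = 2 ^ n - 1 := by
    unfold rowVal cmpl
    rw [← Finset.sum_add_distrib, ← sum_weights (n := n)]
    apply Finset.sum_congr rfl
    intro j _
    have h1 := cmpl_coe (A i j)
    have h2 : (A i j : ℕ) = 0 ∨ (A i j : ℕ) = 1 := by
      have := Fin.is_lt (A i j); omega
    rcases h2 with h | h <;> rw [h1, h] <;> ring
  have := rowVal_le_max A i
  omega

lemma colVal_cmpl {n : ℕ} (A : Fin n → Fin n → Fin 2) (j : Fin n) :
    colVal (cmpl A) j = (2 ^ n - 1) - colVal A j := by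
  have hadd : colVal (cmpl A) j + colVal A j = 2 ^ n - 1 := by
    unfold colVal cmpl
    rw [← Finset.sum_add_distrib, ← sum_weights (n := n)]
    apply Finset.sum_congr rfl
    intro i _
    have h1 := cmpl_coe (A i j)
    have h2 : (A i j : ℕ) = 0 ∨ (A i j : ℕ) = 1 := by
      have := Fin.is_lt (A i j); omega
    rcases h2 with h | h <;> rw [h1, h] <;> ring
  have := colVal_le_max A j
  omega

lemma cmpl_row_sum {n : ℕ} (A : Fin n → Fin n → Fin 2) (i : Fin n) :
    (∑ j, (cmpl A i j : ℕ)) + ∑ j, (A i j : ℕ) = n := by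
  rw [← Finset.sum_add_distrib]
  have : ∀ j : Fin n, ((cmpl A i j : Fin 2) : ℕ) + (A i j : ℕ) = 1 := by
    intro j
    show ((1 - A i j : Fin 2) : ℕ) + (A i j : ℕ) = 1
    have h1 := cmpl_coe (A i j)
    have h2 : (A i j : ℕ) = 0 ∨ (A i j : ℕ) = 1 := by
      have := Fin.is_lt (A i j); omega
    rcases h2 with h | h <;> rw [h1, h]
  rw [Finset.sum_congr rfl fun j _ => this j]
  simp

lemma cmpl_col_sum {n : ℕ} (A : Fin n → Fin n → Fin 2) (j : Fin n) :
    (∑ i, (cmpl A i j : ℕ)) + ∑ i, (A i j : ℕ) = n := by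
  rw [← Finset.sum_add_distrib]
  have : ∀ i : Fin n, ((cmpl A i j : Fin 2) : ℕ) + (A i j : ℕ) = 1 := by
    intro i
    show ((1 - A i j : Fin 2) : ℕ) + (A i j : ℕ) = 1
    have h1 := cmpl_coe (A i j)
    have h2 : (A i j : ℕ) = 0 ∨ (A i j : ℕ) = 1 := by
      have := Fin.is_lt (A i j); omega
    rcases h2 with h | h <;> rw [h1, h]
  rw [Finset.sum_congr rfl fun i _ => this i]
  simp

lemma cmpl_delta_mem_gamma {n : ℕ} {A : Fin n → Fin n → Fin 2}
    (hA : A ∈ DeltaSet n 2) : cmpl A ∈ GammaSet n (n - 2) := by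
  refine ⟨⟨?_, ?_⟩, ?_, ?_⟩
  · intro a b hab
    rw [rowVal_cmpl, rowVal_cmpl]
    exact Nat.sub_le_sub_left (hA.1.1 hab) _
  · intro a b hab
    rw [colVal_cmpl, colVal_cmpl]
    exact Nat.sub_le_sub_left (hA.1.2 hab) _
  · intro i
    have h1 := cmpl_row_sum A i
    have h2 := hA.2.1 i
    omega
  · intro j
    have h1 := cmpl_col_sum A j
    have h2 := hA.2.2 j
    omega

lemma cmpl_gamma_mem_delta {n : ℕ} (hn : 2 ≤ n) {A : Fin n → Fin n → Fin 2}
    (hA : A ∈ GammaSet n (n - 2)) : cmpl A ∈ DeltaSet n 2 := by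
  refine ⟨⟨?_, ?_⟩, ?_, ?_⟩
  · intro a b hab
    rw [rowVal_cmpl, rowVal_cmpl]
    exact Nat.sub_le_sub_left (hA.1.1 hab) _
  · intro a b hab
    rw [colVal_cmpl, colVal_cmpl]
    exact Nat.sub_le_sub_left (hA.1.2 hab) _
  · intro i
    have h1 := cmpl_row_sum A i
    have h2 := hA.2.1 i
    omega
  · intro j
    have h1 := cmpl_col_sum A j
    have h2 := hA.2.2 j
    omega

lemma gamma_eq_image {n : ℕ} (hn : 2 ≤ n) :
    GammaSet n (n - 2) = cmpl '' DeltaSet n 2 := by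
  ext B
  constructor
  · intro hB
    exact ⟨cmpl B, cmpl_gamma_mem_delta hn hB, cmpl_cmpl B⟩
  · rintro ⟨A, hA, rfl⟩
    exact cmpl_delta_mem_gamma hA

lemma delta_eq_gamma {n : ℕ} (hn : 2 ≤ n) :
    deltaCard n 2 = gammaCard n (n - 2) := by
  unfold deltaCard gammaCard
  rw [gamma_eq_image hn, Set.ncard_image_of_injOn]
  intro a _ b _ h
  rw [← cmpl_cmpl a, h, cmpl_cmpl]

end Aux

/-- Theorem: `δ(n,2) = γ(n,n-2)` equals the number of compositions of `n` into parts of size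
at least `2` (ordered tuples `⟨p_1,…,p_s⟩`, `1 ≤ s ≤ ⌊n/2⌋`, `2 ≤ p_i ≤ n`, `∑ p_i = n`). -/
theorem delta_two_eq_compositions (n : ℕ) (hn : 2 ≤ n) :
    deltaCard n 2 = gammaCard n (n - 2) ∧
    gammaCard n (n - 2) =
      Set.ncard {l : List ℕ | 1 ≤ l.length ∧ l.length ≤ n / 2 ∧
        (∀ p ∈ l, 2 ≤ p ∧ p ≤ n) ∧ l.sum = n} := by
  refine ⟨Aux.delta_eq_gamma hn, ?_⟩
  rw [← Aux.delta_eq_gamma hn, Aux.deltaCard_eq_lists, Aux.lists_eq hn]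
end
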